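/- arXiv:0711.3629 — 8 statements merged into one kernel-verified Lean document; each statement's English description precedes it below -/
import Mathlib

section
/- Over GF(2) = ℤ/2ℤ, let g₁ = 1 + X + X³ + X⁴ and g₂ = 1 + X³ + X⁴ in GF(2)[X]. Then the free distance of the (2,1) convolutional code with generator matrix G = (g₁, g₂) equals 7; that is, the minimum of wt(u·g₁) + wt(u·g₂) over all nonzero polynomials u ∈ GF(2)[X] is exactly 7. -/
open Polynomial

section Stmt6Aux

lemma stmt6_two_zero : (2 : (ZMod 2)[X]) = 0 := by
  have h : (2 : (ZMod 2)[X]) = C (2 : ZMod 2) := by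
    rw [show ((2:(ZMod 2)[X])) = ((2:ℕ) : (ZMod 2)[X]) by norm_num, ← C_eq_natCast]
    norm_num
  rw [h, show (2 : ZMod 2) = 0 from rfl, map_zero]

lemma stmt6_sum_X_pow_support (S : Finset ℕ) :
    ((∑ i ∈ S, (X : (ZMod 2)[X]) ^ i)).support = S := by
  ext n
  simp only [mem_support_iff, finset_sum_coeff, coeff_X_pow]
  rw [Finset.sum_ite_eq S n (fun _ => (1 : ZMod 2))]
  split <;> simp_all

lemma stmt6_card_even (p : (ZMod 2)[X]) (hp : p.eval 1 = 0) : 2 ∣ p.support.card := by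
  have h : p.eval 1 = ∑ i ∈ p.support, p.coeff i := by
    rw [eval_eq_sum]; simp [Polynomial.sum]
  have h2 : ∀ i ∈ p.support, p.coeff i = 1 := by
    intro i hi
    have := mem_support_iff.mp hi
    revert this; generalize p.coeff i = a; revert a; decide
  rw [h, Finset.sum_congr rfl h2] at hp
  simp only [Finset.sum_const, nsmul_eq_mul, mul_one] at hp
  exact (ZMod.natCast_eq_zero_iff _ _).mp hp

lemma stmt6_g1_ne : (1 + X + X ^ 3 + X ^ 4 : (ZMod 2)[X]) ≠ 0 := by
  intro h
  have h0 := congrArg (fun p => coeff p 0) h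
  simp at h0

lemma stmt6_g2_ne : (1 + X ^ 3 + X ^ 4 : (ZMod 2)[X]) ≠ 0 := by
  intro h
  have h0 := congrArg (fun p => coeff p 0) h
  simp at h0

lemma stmt6_g1_deg : (1 + X + X ^ 3 + X ^ 4 : (ZMod 2)[X]).degree = 4 := by compute_degree!
lemma stmt6_g2_deg : (1 + X ^ 3 + X ^ 4 : (ZMod 2)[X]).degree = 4 := by compute_degree!
lemma stmt6_g1_natDeg : (1 + X + X ^ 3 + X ^ 4 : (ZMod 2)[X]).natDegree = 4 := by compute_degree!
lemma stmt6_g2_natDeg : (1 + X ^ 3 + X ^ 4 : (ZMod 2)[X]).natDegree = 4 := by compute_degree!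

lemma stmt6_not_X_dvd_g1 : ¬ ((X : (ZMod 2)[X]) ∣ (1 + X + X ^ 3 + X ^ 4 : (ZMod 2)[X])) := by
  rw [X_dvd_iff]; simp

lemma stmt6_not_X_dvd_g2 : ¬ ((X : (ZMod 2)[X]) ∣ (1 + X ^ 3 + X ^ 4 : (ZMod 2)[X])) := by
  rw [X_dvd_iff]; simp

lemma stmt6_xd_ne (d : ℕ) (hd : 1 ≤ d) : (X ^ d + 1 : (ZMod 2)[X]) ≠ 0 := by
  intro h
  have h0 := congrArg (fun p => coeff p 0) h
  simp only [coeff_add, coeff_X_pow, coeff_one, coeff_zero] at h0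
  rw [if_neg (by omega : ¬ (0 = d))] at h0
  simp at h0

lemma stmt6_xd_deg_le (d : ℕ) : (X ^ d + 1 : (ZMod 2)[X]).degree ≤ d := by
  refine le_trans (degree_add_le _ _) ?_
  simp [degree_X_pow]

lemma stmt6_xd_natDeg (d : ℕ) : (X ^ d + 1 : (ZMod 2)[X]).natDegree = d := by
  rw [show (X ^ d + 1 : (ZMod 2)[X]) = X ^ d + C 1 by rw [C_1], natDegree_X_pow_add_C]

lemma stmt6_wt_two_struct (g u : (ZMod 2)[X]) (hg : ¬ ((X : (ZMod 2)[X]) ∣ g)) (hgne : g ≠ 0)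
    (h2 : (u * g).support.card = 2) :
    ∃ (k d : ℕ) (q : (ZMod 2)[X]), 1 ≤ d ∧ u = X ^ k * q ∧ X ^ d + 1 = g * q := by
  obtain ⟨k, m, hkm, x, y, hx, hy, hf⟩ := Polynomial.card_support_eq_two.mp h2
  have z2 : ∀ a : ZMod 2, a ≠ 0 → a = 1 := by decide
  have hx1 : x = 1 := z2 x hx
  have hy1 : y = 1 := z2 y hy
  subst hx1 hy1
  set d := m - k with hdd
  have hm : m = k + d := by omega
  have hfac : u * g = X ^ k * (X ^ d + 1) := by
    rw [hf, hm]; simp [C_1]; ring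
  have hcop : IsCoprime g ((X : (ZMod 2)[X]) ^ k) :=
    (prime_X.irreducible.coprime_iff_not_dvd.mpr hg).pow_left.symm
  have hdvd : g ∣ X ^ d + 1 := by
    refine hcop.dvd_of_dvd_mul_right ?_
    exact ⟨u, by linear_combination -hfac⟩
  obtain ⟨q, hq⟩ := hdvd
  refine ⟨k, d, q, by omega, ?_, hq⟩
  have : u * g = (X ^ k * q) * g := by rw [hfac, hq]; ring
  exact mul_right_cancel₀ hgne this

lemma stmt6_coeffs_V (V : (ZMod 2)[X]) (d : ℕ) (hd : 4 ≤ d)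
    (h' : V + V*X^1 + V*X^3 + V*X^4 = (1 + X^3 + X^4) + (1+X^3+X^4)*X^d) :
    V.coeff 0 = 1 ∧ V.coeff 1 = 1 ∧ V.coeff 2 = 1 ∧ V.coeff 3 = 1 := by
  have e0 := congrArg (fun p => coeff p 0) h'
  have e1 := congrArg (fun p => coeff p 1) h'
  have e2 := congrArg (fun p => coeff p 2) h'
  have e3 := congrArg (fun p => coeff p 3) h'
  simp only [coeff_add, coeff_mul_X_pow', coeff_one, coeff_X_pow] at e0 e1 e2 e3
  norm_num at e0 e1 e2 e3
  rw [if_neg (by omega : ¬ d = 0)] at e0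
  rw [if_neg (by omega : ¬ d ≤ 1)] at e1
  rw [if_neg (by omega : ¬ d ≤ 2)] at e2
  rw [if_neg (by omega : ¬ d ≤ 3)] at e3
  norm_num at e0 e1 e2 e3
  have h21 : ∀ a b : ZMod 2, a + b = 0 → b = 1 → a = 1 := by decide
  have h31 : ∀ a b c : ZMod 2, a + b + c = 1 → b = 1 → c = 1 → a = 1 := by decide
  have hV1 := h21 _ _ e1 e0
  have hV2 := h21 _ _ e2 hV1
  have hV3 := h31 _ _ _ e3 hV2 e0
  exact ⟨e0, hV1, hV2, hV3⟩

lemma stmt6_coeffs_W (W : (ZMod 2)[X]) (d : ℕ) (hd : 6 ≤ d)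
    (h' : W + W*X^3 + W*X^4 = (1 + X + X^3 + X^4) + (1+X+X^3+X^4)*X^d) :
    W.coeff 0 = 1 ∧ W.coeff 1 = 1 ∧ W.coeff 4 = 1 ∧ W.coeff 5 = 1 := by
  have e0 := congrArg (fun p => coeff p 0) h'
  have e1 := congrArg (fun p => coeff p 1) h'
  have e2 := congrArg (fun p => coeff p 2) h'
  have e3 := congrArg (fun p => coeff p 3) h'
  have e4 := congrArg (fun p => coeff p 4) h'
  have e5 := congrArg (fun p => coeff p 5) h'
  simp only [coeff_add, coeff_mul_X_pow', coeff_one, coeff_X, coeff_X_pow] at e0 e1 e2 e3 e4 e5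
  norm_num at e0 e1 e2 e3 e4 e5
  rw [if_neg (by omega : ¬ d = 0)] at e0
  rw [if_neg (by omega : ¬ d ≤ 1)] at e1
  rw [if_neg (by omega : ¬ d ≤ 2)] at e2
  rw [if_neg (by omega : ¬ d ≤ 3)] at e3
  rw [if_neg (by omega : ¬ d ≤ 4)] at e4
  rw [if_neg (by omega : ¬ d ≤ 5)] at e5
  norm_num at e0 e1 e2 e3 e4 e5
  have h20 : ∀ a b : ZMod 2, a + b = 1 → b = 1 → a = 0 := by decide
  have h31 : ∀ a b c : ZMod 2, a + b + c = 1 → b = 1 → c = 1 → a = 1 := by decide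
  have h30 : ∀ a b c : ZMod 2, a + b + c = 0 → b = 0 → c = 1 → a = 1 := by decide
  have hW4 := h31 _ _ _ e4 e1 e0
  have hW5 := h30 _ _ _ e5 e2 e1
  exact ⟨e0, e1, hW4, hW5⟩

lemma stmt6_not_dvd_4 : ¬ ((1 + X^3 + X^4 : (ZMod 2)[X]) ∣ X^4 + 1) := by
  intro h
  have h3 : (1 + X^3 + X^4 : (ZMod 2)[X]) ∣ X^3 := by
    have heq : (X^3 : (ZMod 2)[X]) = (X^4 + 1) + (1 + X^3 + X^4) := by
      linear_combination (-(1 + X^4) : (ZMod 2)[X]) * stmt6_two_zero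
    have h4 := dvd_add h (dvd_refl (1 + X^3 + X^4 : (ZMod 2)[X]))
    rwa [← heq] at h4
  have := Polynomial.eq_zero_of_dvd_of_degree_lt h3
    (by rw [stmt6_g2_deg, degree_X_pow]; norm_num)
  exact pow_ne_zero 3 (X_ne_zero) this

lemma stmt6_not_dvd_5 : ¬ ((1 + X^3 + X^4 : (ZMod 2)[X]) ∣ X^5 + 1) := by
  intro h
  have h3 : (1 + X^3 + X^4 : (ZMod 2)[X]) ∣ X^3 + X := by
    have heq : (X^3 + X : (ZMod 2)[X]) = (X^5 + 1) + (X + 1) * (1 + X^3 + X^4) := by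
      linear_combination (-(1 + X^4 + X^5) : (ZMod 2)[X]) * stmt6_two_zero
    have h4 := dvd_add h (Dvd.intro_left (X + 1 : (ZMod 2)[X]) rfl)
    rwa [← heq] at h4
  have hne : (X^3 + X : (ZMod 2)[X]) ≠ 0 := by
    intro hz
    have := congrArg (fun p => coeff p 1) hz
    simp at this
  have := Polynomial.eq_zero_of_dvd_of_degree_lt h3
    (by
      rw [stmt6_g2_deg]
      refine lt_of_le_of_lt (degree_add_le _ _) ?_
      simp [degree_X_pow]
      norm_num)
  exact hne this

/-- If `wt(u·g₁) = 2` then `wt(u·g₂) ≥ 5`. -/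
lemma stmt6_keyA (u : (ZMod 2)[X])
    (h2 : (u * (1 + X + X ^ 3 + X ^ 4)).support.card = 2) :
    5 ≤ (u * (1 + X ^ 3 + X ^ 4)).support.card := by
  obtain ⟨k, d, q, hd1, hu, hq⟩ :=
    stmt6_wt_two_struct _ u stmt6_not_X_dvd_g1 stmt6_g1_ne h2
  have hd4 : 4 ≤ d := by
    by_contra hlt
    have hz := Polynomial.eq_zero_of_dvd_of_degree_lt ⟨q, hq⟩
      (lt_of_le_of_lt (stmt6_xd_deg_le d)
        (by rw [stmt6_g1_deg]; exact_mod_cast (by omega : d < 4)))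
    exact stmt6_xd_ne d hd1 hz
  set V : (ZMod 2)[X] := q * (1 + X^3 + X^4) with hVdef
  have hug2 : u * (1 + X ^ 3 + X ^ 4) = X ^ k * V := by rw [hu, hVdef]; ring
  have hVg : V + V*X^1 + V*X^3 + V*X^4 = (1 + X^3 + X^4) + (1+X^3+X^4)*X^d := by
    rw [hVdef]; linear_combination (-(1 + X^3 + X^4) : (ZMod 2)[X]) * hq
  obtain ⟨hV0, hV1, hV2, hV3⟩ := stmt6_coeffs_V V d hd4 hVg
  have hVne : V ≠ 0 := fun h => by simp [h] at hV0
  have hprod : V * (1 + X + X^3 + X^4) = (X^d + 1) * (1 + X^3 + X^4) := by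
    rw [hVdef]; linear_combination (-(1 + X^3 + X^4) : (ZMod 2)[X]) * hq
  have hdegV : V.natDegree = d := by
    have hL : (V * (1 + X + X^3 + X^4)).natDegree = V.natDegree + 4 := by
      rw [natDegree_mul hVne stmt6_g1_ne, stmt6_g1_natDeg]
    have hR : ((X^d + 1 : (ZMod 2)[X]) * (1 + X^3 + X^4)).natDegree = d + 4 := by
      rw [natDegree_mul (stmt6_xd_ne d hd1) stmt6_g2_ne, stmt6_xd_natDeg, stmt6_g2_natDeg]
    rw [hprod, hR] at hL
    omega
  have hVd : V.coeff d ≠ 0 := by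
    rw [← hdegV]
    exact fun h => hVne (leadingCoeff_eq_zero.mp h)
  have hmem : ∀ i : ℕ, V.coeff i ≠ 0 → (k + i) ∈ (X ^ k * V).support := by
    intro i hi
    rw [mem_support_iff, show k + i = i + k by ring, coeff_X_pow_mul]
    exact hi
  have hsub : ({k, k+1, k+2, k+3, k+d} : Finset ℕ) ⊆ (X ^ k * V).support := by
    intro n hn
    simp only [Finset.mem_insert, Finset.mem_singleton] at hn
    rcases hn with rfl | rfl | rfl | rfl | rfl
    · simpa using hmem 0 (by simp [hV0])
    · exact hmem 1 (by simp [hV1])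
    · exact hmem 2 (by simp [hV2])
    · exact hmem 3 (by simp [hV3])
    · exact hmem d hVd
  have hcard : ({k, k+1, k+2, k+3, k+d} : Finset ℕ).card = 5 := by
    rw [Finset.card_insert_of_notMem (by simp; omega),
        Finset.card_insert_of_notMem (by simp; omega),
        Finset.card_insert_of_notMem (by simp; omega),
        Finset.card_insert_of_notMem (by simp; omega),
        Finset.card_singleton]
  rw [hug2]
  exact le_trans (le_of_eq hcard.symm) (Finset.card_le_card hsub)

/-- If `wt(u·g₂) = 2` then `wt(u·g₁) ≥ 5`. -/
lemma stmt6_keyB (u : (ZMod 2)[X])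
    (h2 : (u * (1 + X ^ 3 + X ^ 4)).support.card = 2) :
    5 ≤ (u * (1 + X + X ^ 3 + X ^ 4)).support.card := by
  obtain ⟨k, d, q, hd1, hu, hq⟩ :=
    stmt6_wt_two_struct _ u stmt6_not_X_dvd_g2 stmt6_g2_ne h2
  have hd4 : 4 ≤ d := by
    by_contra hlt
    have hz := Polynomial.eq_zero_of_dvd_of_degree_lt ⟨q, hq⟩
      (lt_of_le_of_lt (stmt6_xd_deg_le d)
        (by rw [stmt6_g2_deg]; exact_mod_cast (by omega : d < 4)))
    exact stmt6_xd_ne d hd1 hz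
  have hd6 : 6 ≤ d := by
    rcases (by omega : d = 4 ∨ d = 5 ∨ 6 ≤ d) with rfl | rfl | h6
    · exact absurd ⟨q, hq⟩ stmt6_not_dvd_4
    · exact absurd ⟨q, hq⟩ stmt6_not_dvd_5
    · exact h6
  set W : (ZMod 2)[X] := q * (1 + X + X^3 + X^4) with hWdef
  have hug1 : u * (1 + X + X ^ 3 + X ^ 4) = X ^ k * W := by rw [hu, hWdef]; ring
  have hWg : W + W*X^3 + W*X^4 = (1 + X + X^3 + X^4) + (1+X+X^3+X^4)*X^d := by
    rw [hWdef]; linear_combination (-(1 + X + X^3 + X^4) : (ZMod 2)[X]) * hq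
  obtain ⟨hW0, hW1, hW4, hW5⟩ := stmt6_coeffs_W W d hd6 hWg
  have hWne : W ≠ 0 := fun h => by simp [h] at hW0
  have hprod : W * (1 + X^3 + X^4) = (X^d + 1) * (1 + X + X^3 + X^4) := by
    rw [hWdef]; linear_combination (-(1 + X + X^3 + X^4) : (ZMod 2)[X]) * hq
  have hdegW : W.natDegree = d := by
    have hL : (W * (1 + X^3 + X^4)).natDegree = W.natDegree + 4 := by
      rw [natDegree_mul hWne stmt6_g2_ne, stmt6_g2_natDeg]
    have hR : ((X^d + 1 : (ZMod 2)[X]) * (1 + X + X^3 + X^4)).natDegree = d + 4 := by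
      rw [natDegree_mul (stmt6_xd_ne d hd1) stmt6_g1_ne, stmt6_xd_natDeg, stmt6_g1_natDeg]
    rw [hprod, hR] at hL
    omega
  have hWd : W.coeff d ≠ 0 := by
    rw [← hdegW]
    exact fun h => hWne (leadingCoeff_eq_zero.mp h)
  have hmem : ∀ i : ℕ, W.coeff i ≠ 0 → (k + i) ∈ (X ^ k * W).support := by
    intro i hi
    rw [mem_support_iff, show k + i = i + k by ring, coeff_X_pow_mul]
    exact hi
  have hsub : ({k, k+1, k+4, k+5, k+d} : Finset ℕ) ⊆ (X ^ k * W).support := by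
    intro n hn
    simp only [Finset.mem_insert, Finset.mem_singleton] at hn
    rcases hn with rfl | rfl | rfl | rfl | rfl
    · simpa using hmem 0 (by simp [hW0])
    · exact hmem 1 (by simp [hW1])
    · exact hmem 4 (by simp [hW4])
    · exact hmem 5 (by simp [hW5])
    · exact hmem d hWd
  have hcard : ({k, k+1, k+4, k+5, k+d} : Finset ℕ).card = 5 := by
    rw [Finset.card_insert_of_notMem (by simp; omega),
        Finset.card_insert_of_notMem (by simp; omega),
        Finset.card_insert_of_notMem (by simp; omega),
        Finset.card_insert_of_notMem (by simp; omega),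
        Finset.card_singleton]
  rw [hug1]
  exact le_trans (le_of_eq hcard.symm) (Finset.card_le_card hsub)

/-- `wt(u·g₂) ≠ 1`. -/
lemma stmt6_B_ne_one (u : (ZMod 2)[X])
    (h1 : (u * (1 + X ^ 3 + X ^ 4)).support.card = 1) : False := by
  obtain ⟨k, x, hx, hf⟩ := Polynomial.card_support_eq_one.mp h1
  have z2 : ∀ a : ZMod 2, a ≠ 0 → a = 1 := by decide
  rw [z2 x hx, C_1, one_mul] at hf
  have hdvd : (1 + X ^ 3 + X ^ 4 : (ZMod 2)[X]) ∣ X ^ k := ⟨u, by rw [← hf]; ring⟩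
  have hcop : IsCoprime ((1 + X ^ 3 + X ^ 4 : (ZMod 2)[X])) (X ^ k) :=
    (prime_X.irreducible.coprime_iff_not_dvd.mpr stmt6_not_X_dvd_g2).pow_left.symm
  have hunit := hcop.isUnit_of_dvd hdvd
  have := Polynomial.degree_eq_zero_of_isUnit hunit
  rw [stmt6_g2_deg] at this
  norm_num at this

end Stmt6Aux

/-- Over `GF(2)`, the free distance of the `(2,1)` convolutional code with
generator matrix `(1 + X + X³ + X⁴, 1 + X³ + X⁴)` equals `7`: the minimum of
`wt(u·g₁) + wt(u·g₂)` over all nonzero `u ∈ GF(2)[X]` is exactly `7`. -/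
theorem stmt_6 :
    IsLeast {d : ℕ | ∃ u : Polynomial (ZMod 2), u ≠ 0 ∧
      d = (u * (1 + X + X ^ 3 + X ^ 4)).support.card
        + (u * (1 + X ^ 3 + X ^ 4)).support.card}
      7 := by
  constructor
  · refine ⟨1, one_ne_zero, ?_⟩
    have h1 : (1 + X + X ^ 3 + X ^ 4 : (ZMod 2)[X]) = ∑ i ∈ ({0,1,3,4} : Finset ℕ), X ^ i := by
      simp [Finset.sum_insert, Finset.mem_insert]; ring
    have h2 : (1 + X ^ 3 + X ^ 4 : (ZMod 2)[X]) = ∑ i ∈ ({0,3,4} : Finset ℕ), X ^ i := by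
      simp [Finset.sum_insert, Finset.mem_insert]; ring
    rw [one_mul, one_mul, h1, h2, stmt6_sum_X_pow_support, stmt6_sum_X_pow_support]
    rfl
  · rintro d ⟨u, hu, rfl⟩
    set A := (u * (1 + X + X ^ 3 + X ^ 4)).support.card with hA
    set B := (u * (1 + X ^ 3 + X ^ 4)).support.card with hB
    have hA0 : u * (1 + X + X ^ 3 + X ^ 4) ≠ 0 := mul_ne_zero hu stmt6_g1_ne
    have hB0 : u * (1 + X ^ 3 + X ^ 4) ≠ 0 := mul_ne_zero hu stmt6_g2_ne
    have hApos : 1 ≤ A := Finset.card_pos.mpr (support_nonempty.mpr hA0)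
    have hBpos : 1 ≤ B := Finset.card_pos.mpr (support_nonempty.mpr hB0)
    have hAeven : 2 ∣ A := by
      refine stmt6_card_even _ ?_
      rw [eval_mul]
      have : (1 + X + X ^ 3 + X ^ 4 : (ZMod 2)[X]).eval 1 = 0 := by
        simp [eval_add, eval_pow]
        decide
      rw [this, mul_zero]
    have hBne1 : B ≠ 1 := fun h => stmt6_B_ne_one u h
    rcases (by omega : A = 2 ∨ 4 ≤ A) with hA2 | hA4
    · have := stmt6_keyA u hA2
      omega
    · rcases (by omega : B = 2 ∨ 3 ≤ B) with hB2 | hB3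
      · have := stmt6_keyB u hB2
        omega
      · omega
end

section
/- Let F be a field of characteristic 2, let n > k ≥ 1, set r = n − k, and let f = Σ_{i=0}^{r} β_i X^i ∈ F[X] with β₀ ≠ 0 and β_r ≠ 0 be a divisor of Xⁿ − 1 of degree r. Let C be the cyclic code of length n generated by f, assume every nonzero codeword of C has Hamming weight at least d₁ and every nonzero codeword of the dual code of C has Hamming weight at least d₂, and set d = min(d₁, d₂). Fix t with 0 < t < r and define ĝ₁ = f − β_t X^t + X^t and ĝ₂ = f − β_t X^t in F[X]. Then for every nonzero polynomial u ∈ F[X], wt(u·ĝ₁) + wt(u·ĝ₂) ≥ d + 2; that is, the free distance of the (2,1) convolutional code with generator matrix (ĝ₁, ĝ₂) is at least d + 2. -/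
/-!
Put `P = u ĝ₂` and `Q = u Xᵗ`, so that `u ĝ₁ = P + Q` and `u f = P + β_t Q`. Where `Q` vanishes the
three products agree, and where it does not, `P + Q` or `P` is nonzero; hence `wt(u ĝ₁) + wt(u ĝ₂)`
is at least `|supp(uf) \ supp Q| + |supp(uf) ∪ supp Q|`.

Write `u = (Xⁿ - 1)ᵐ w` with `Xⁿ - 1 ∤ w`. If `fw ≢ 0 mod Xⁿ - 1` it reduces to a nonzero codeword;
otherwise `w Xᵗ mod Xⁿ - 1` is nonzero (`Xᵗ` is prime to `Xⁿ - 1`), and read backwards it lies in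
the dual code. Either way `d` is at most the number of residues mod `n` of exponents in
`supp(wf) ∪ supp(w Xᵗ)`. If `m = 0`, the lowest and highest terms of `uf` lie outside `supp Q`
because `0 < t < deg f`, which gives the extra `2`. If `m ≥ 1`, every residue class met by the
support of `q` contains at least two exponents of `(Xⁿ - 1) q` (its least one, and `n` above its
largest one), so `wt(u ĝᵢ)` is at least twice the number of residues met by `supp(w ĝᵢ)`, and
those residues cover the ones above.
-/

open Polynomial Classical Finset

namespace Polynomial

variable {R : Type*} [CommRing R] {n : ℕ}

lemma monic_X_pow_sub_one (hn : 0 < n) : (X ^ n - 1 : R[X]).Monic := by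
  simpa using monic_X_pow_sub_C (1 : R) hn.ne'

lemma isCoprime_X_pow_sub_one_X_pow (hn : 0 < n) (t : ℕ) :
    IsCoprime (X ^ n - 1 : R[X]) (X ^ t) := by
  refine IsCoprime.pow_right ⟨-1, X ^ (n - 1), ?_⟩
  rw [← pow_succ, Nat.sub_add_cancel hn]
  ring

lemma exists_coeff_fin_ne_zero {p : R[X]} (hp : p ≠ 0) (hdeg : p.natDegree < n) :
    ∃ i : Fin n, p.coeff i ≠ 0 :=
  ⟨⟨p.natDegree, hdeg⟩, leadingCoeff_ne_zero.2 hp⟩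

lemma card_filter_coeff_fin_ne_zero_le (p : R[X]) : #{i : Fin n | p.coeff i ≠ 0} ≤ #p.support :=
  card_le_card_of_injOn (↑) (fun _ hi => by simpa using hi) Fin.val_injective.injOn

section Nontrivial

variable [Nontrivial R]

lemma degree_X_pow_sub_one (hn : 0 < n) : (X ^ n - 1 : R[X]).degree = n := by
  simpa using degree_X_pow_sub_C (R := R) hn 1

lemma natDegree_modByMonic_X_pow_sub_one_lt (hn : 0 < n) (p : R[X]) :
    (p %ₘ (X ^ n - 1)).natDegree < n := by
  rcases eq_or_ne (p %ₘ (X ^ n - 1)) 0 with h | h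
  · simpa [h] using hn
  · exact (natDegree_lt_iff_degree_lt h).2
      (degree_X_pow_sub_one (R := R) hn ▸ degree_modByMonic_lt p (monic_X_pow_sub_one hn))

lemma X_pow_modByMonic_X_pow_sub_one (hn : 0 < n) (m : ℕ) :
    (X ^ m : R[X]) %ₘ (X ^ n - 1) = X ^ (m % n) := by
  have hdvd : (X ^ n - 1 : R[X]) ∣ X ^ m - X ^ (m % n) := by
    have : (X ^ m - X ^ (m % n) : R[X]) = X ^ (m % n) * ((X ^ n) ^ (m / n) - 1) := by
      rw [← pow_mul, mul_sub, ← pow_add, Nat.mod_add_div, mul_one]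
    exact this ▸ (sub_one_dvd_pow_sub_one _ _).mul_left _
  rw [modByMonic_eq_of_dvd_sub (monic_X_pow_sub_one hn) hdvd,
    (modByMonic_eq_self_iff (monic_X_pow_sub_one hn)).2]
  rw [degree_X_pow, degree_X_pow_sub_one hn]
  exact_mod_cast Nat.mod_lt m hn

lemma C_mul_X_pow_modByMonic_X_pow_sub_one (hn : 0 < n) (a : R) (m : ℕ) :
    (C a * X ^ m) %ₘ (X ^ n - 1) = C a * X ^ (m % n) := by
  rw [← smul_eq_C_mul, smul_modByMonic, X_pow_modByMonic_X_pow_sub_one hn, smul_eq_C_mul]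

lemma support_modByMonic_X_pow_sub_one_subset (hn : 0 < n) (p : R[X]) :
    (p %ₘ (X ^ n - 1)).support ⊆ p.support.image (· % n) := by
  intro j hj
  rw [p.as_sum_support_C_mul_X_pow, ← modByMonicHom_apply, map_sum] at hj
  simp only [modByMonicHom_apply, C_mul_X_pow_modByMonic_X_pow_sub_one hn, mem_support_iff,
    finsetSum_coeff, coeff_C_mul_X_pow] at hj
  obtain ⟨i, hi, hij⟩ := exists_ne_zero_of_sum_ne_zero hj
  exact mem_image.2 ⟨i, hi, by_contra fun h => hij (if_neg (Ne.symm h))⟩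

lemma coeff_zero_mul_modByMonic_X_pow_sub_one (hn : 0 < n) {a b : R[X]}
    (ha : a.natDegree < n) (hb : b.natDegree < n) :
    ((a * b) %ₘ (X ^ n - 1)).coeff 0 = ∑ i : Fin n, a.coeff ↑(-i) * b.coeff i := by
  have hsum : ∀ p : R[X], p.natDegree < n → p = ∑ i : Fin n, C (p.coeff i) * X ^ (i : ℕ) :=
    fun p hp => by
      rw [Fin.sum_univ_eq_sum_range (fun i => C (p.coeff i) * X ^ i)]
      exact p.as_sum_range_C_mul_X_pow' hp
  conv_lhs => rw [hsum a ha, hsum b hb, sum_mul_sum, ← modByMonicHom_apply, map_sum]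
  have hterm : ∀ i j : Fin n, (C (a.coeff i) * X ^ (i : ℕ) * (C (b.coeff j) * X ^ (j : ℕ))) %ₘ
      (X ^ n - 1) = C (a.coeff i * b.coeff j) * X ^ ((i + j : Fin n) : ℕ) := fun i j => by
    rw [mul_mul_mul_comm, ← C_mul, ← pow_add, C_mul_X_pow_modByMonic_X_pow_sub_one hn, Fin.val_add]
  simp only [map_sum, modByMonicHom_apply, hterm, finsetSum_coeff, coeff_C_mul_X_pow]
  rw [sum_comm]
  refine sum_congr rfl fun j _ => ?_
  have : NeZero n := ⟨hn.ne'⟩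
  simp only [eq_comm (a := 0), Fin.val_eq_zero_iff, ← eq_neg_iff_add_eq_zero, sum_ite_eq',
    mem_univ, if_true]

end Nontrivial

lemma exists_lt_mem_support_X_pow_sub_one_mul (hn : 0 < n) (q : R[X]) {j : ℕ}
    (hj : j ∈ q.support.image (· % n)) :
    ∃ a ∈ ((X ^ n - 1) * q).support, ∃ b ∈ ((X ^ n - 1) * q).support,
      a < b ∧ a % n = j ∧ b % n = j := by
  obtain ⟨i, hi, rfl⟩ := mem_image.1 hj
  set s := q.support.filter (· % n = i % n)
  have hs : s.Nonempty := ⟨i, mem_filter.2 ⟨hi, rfl⟩⟩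
  obtain ⟨hmin, hmin_mod⟩ := mem_filter.1 (s.min'_mem hs)
  obtain ⟨hmax, hmax_mod⟩ := mem_filter.1 (s.max'_mem hs)
  have hcoeff : ∀ k, ((X ^ n - 1) * q).coeff k
      = (if n ≤ k then q.coeff (k - n) else 0) - q.coeff k := fun k => by
    rw [sub_mul, one_mul, coeff_sub, coeff_X_pow_mul']
  refine ⟨s.min' hs, ?_, s.max' hs + n, ?_, ?_, hmin_mod, by rw [Nat.add_mod_right, hmax_mod]⟩
  · have hbelow : (if n ≤ s.min' hs then q.coeff (s.min' hs - n) else 0) = 0 := by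
      split_ifs with h
      · by_contra hne
        have := s.min'_le _ <| mem_filter.2
          ⟨mem_support_iff.2 hne, by rw [← Nat.mod_eq_sub_mod h, hmin_mod]⟩
        omega
      · rfl
    rw [mem_support_iff, hcoeff, hbelow, zero_sub, neg_ne_zero]
    exact mem_support_iff.1 hmin
  · have habove : q.coeff (s.max' hs + n) = 0 := by
      by_contra hne
      have := s.le_max' _ <| mem_filter.2
        ⟨mem_support_iff.2 hne, by rw [Nat.add_mod_right, hmax_mod]⟩
      omega
    simpa [hcoeff, habove] using hmax
  · have := s.min'_le _ (s.max'_mem hs)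
    omega

lemma image_mod_support_subset_X_pow_sub_one_mul (hn : 0 < n) (q : R[X]) :
    q.support.image (· % n) ⊆ ((X ^ n - 1) * q).support.image (· % n) := fun _ hj => by
  obtain ⟨a, ha, -, -, -, haj, -⟩ := exists_lt_mem_support_X_pow_sub_one_mul hn q hj
  exact mem_image.2 ⟨a, ha, haj⟩

lemma two_mul_card_image_mod_support_le (hn : 0 < n) (q : R[X]) :
    2 * #(q.support.image (· % n)) ≤ #((X ^ n - 1) * q).support := by
  set P := ((X ^ n - 1) * q).support
  calc 2 * #(q.support.image (· % n))
      = ∑ _j ∈ q.support.image (· % n), 2 := by rw [sum_const, smul_eq_mul, mul_comm]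
    _ ≤ ∑ j ∈ q.support.image (· % n), #{i ∈ P | i % n = j} := sum_le_sum fun j hj => by
        obtain ⟨a, ha, b, hb, hab, haj, hbj⟩ := exists_lt_mem_support_X_pow_sub_one_mul hn q hj
        exact one_lt_card.2 ⟨a, mem_filter.2 ⟨ha, haj⟩, b, mem_filter.2 ⟨hb, hbj⟩, hab.ne⟩
    _ ≤ ∑ j ∈ P.image (· % n), #{i ∈ P | i % n = j} :=
        sum_le_sum_of_subset (image_mod_support_subset_X_pow_sub_one_mul hn q)
    _ = #P := (card_eq_sum_card_image _ _).symm

lemma two_mul_card_image_mod_support_le_pow_succ (hn : 0 < n) (q : R[X]) (m : ℕ) :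
    2 * #(q.support.image (· % n)) ≤ #((X ^ n - 1) ^ (m + 1) * q).support := by
  have hmono : q.support.image (· % n) ⊆ ((X ^ n - 1) ^ m * q).support.image (· % n) := by
    induction m with
    | zero => simp
    | succ m ih =>
      rw [pow_succ', mul_assoc]
      exact ih.trans (image_mod_support_subset_X_pow_sub_one_mul hn _)
  rw [pow_succ', mul_assoc]
  exact (Nat.mul_le_mul_left 2 (card_le_card hmono)).trans (two_mul_card_image_mod_support_le hn _)

section Supports

variable (P Q : R[X]) (c : R)

lemma support_add_C_mul_sdiff_subset :
    (P + C c * Q).support \ Q.support ⊆ (P + Q).support ∩ P.support := fun i hi => by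
  simp only [mem_sdiff, mem_inter, mem_support_iff, coeff_add, coeff_C_mul, not_not] at hi ⊢
  simpa [hi.2] using hi.1

lemma support_add_C_mul_union_subset :
    (P + C c * Q).support ∪ Q.support ⊆ (P + Q).support ∪ P.support := fun i hi => by
  simp only [mem_union, mem_support_iff, coeff_add, coeff_C_mul] at hi ⊢
  by_contra! h
  have hQ : Q.coeff i = 0 := by linear_combination h.1 - h.2
  simp [hQ, h.2] at hi

lemma card_support_sdiff_add_card_support_union_le :
    #((P + C c * Q).support \ Q.support) + #((P + C c * Q).support ∪ Q.support)
      ≤ #(P + Q).support + #P.support := by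
  rw [← card_union_add_card_inter (P + Q).support]
  have := card_le_card (support_add_C_mul_sdiff_subset P Q c)
  have := card_le_card (support_add_C_mul_union_subset P Q c)
  omega

end Supports

lemma two_le_card_support_mul_sdiff_support_mul_X_pow [IsDomain R] {w f : R[X]} {t : ℕ}
    (hw : w ≠ 0) (hf : f.coeff 0 ≠ 0) (ht0 : 0 < t) (ht : t < f.natDegree) :
    2 ≤ #((w * f).support \ (w * X ^ t).support) := by
  have hf0 : f ≠ 0 := fun h => hf (by simp [h])
  have hlo : w.natTrailingDegree ∈ (w * f).support := by
    have := natTrailingDegree_mem_support_of_nonzero (mul_ne_zero hw hf0)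
    rwa [natTrailingDegree_mul hw hf0, natTrailingDegree_eq_zero.2 (Or.inr hf), add_zero] at this
  have hhi : w.natDegree + f.natDegree ∈ (w * f).support := by
    have := natDegree_mem_support_of_nonzero (mul_ne_zero hw hf0)
    rwa [natDegree_mul hw hf0] at this
  have hlo' : w.natTrailingDegree ∉ (w * X ^ t).support := by
    rw [notMem_support_iff, coeff_mul_X_pow']
    split_ifs
    · exact coeff_eq_zero_of_lt_natTrailingDegree (by omega)
    · rfl
  have hhi' : w.natDegree + f.natDegree ∉ (w * X ^ t).support := by
    rw [notMem_support_iff, coeff_mul_X_pow', if_pos (by omega)]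
    exact coeff_eq_zero_of_natDegree_lt (by omega)
  have := natTrailingDegree_le_natDegree (p := w)
  exact one_lt_card.2 ⟨_, mem_sdiff.2 ⟨hlo, hlo'⟩, _, mem_sdiff.2 ⟨hhi, hhi'⟩, by omega⟩

end Polynomial

section CyclicCode

variable {R : Type*} [CommRing R] [Nontrivial R] {n : ℕ} {f : R[X]} {d₁ d₂ : ℕ}

lemma le_card_support_of_modByMonic_ne_zero (hn : 0 < n)
    (hC : ∀ u : R[X], (fun i : Fin n => ((f * u) %ₘ (X ^ n - 1)).coeff i) ≠ 0 →
      d₁ ≤ #{i : Fin n | ((f * u) %ₘ (X ^ n - 1)).coeff i ≠ 0})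
    {w : R[X]} (hw : (f * w) %ₘ (X ^ n - 1) ≠ 0) :
    d₁ ≤ #((f * w) %ₘ (X ^ n - 1)).support := by
  obtain ⟨i, hi⟩ := exists_coeff_fin_ne_zero hw (natDegree_modByMonic_X_pow_sub_one_lt hn _)
  exact (hC w fun h => hi (congrFun h i)).trans (card_filter_coeff_fin_ne_zero_le _)

/-- Read backwards cyclically (`i ↦ -i` on `Fin n`), `ρ` is a word of the dual code. -/
lemma le_card_support_of_dvd_mul (hn : 0 < n)
    (hdual : ∀ v : Fin n → R, v ≠ 0 →
      (∀ u : R[X], ∑ i : Fin n, v i * ((f * u) %ₘ (X ^ n - 1)).coeff i = 0) →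
      d₂ ≤ #{i | v i ≠ 0})
    {ρ : R[X]} (hρ : ρ ≠ 0) (hdeg : ρ.natDegree < n) (hdvd : X ^ n - 1 ∣ ρ * f) :
    d₂ ≤ #ρ.support := by
  obtain ⟨i, hi⟩ := exists_coeff_fin_ne_zero hρ hdeg
  have horth : ∀ u : R[X],
      ∑ i : Fin n, ρ.coeff ↑(-i) * ((f * u) %ₘ (X ^ n - 1)).coeff i = 0 := fun u => by
    rw [← coeff_zero_mul_modByMonic_X_pow_sub_one hn hdeg
      (natDegree_modByMonic_X_pow_sub_one_lt hn _), modByMonic_eq_sub_mul_div (f * u),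
      (modByMonic_eq_zero_iff_dvd (monic_X_pow_sub_one hn)).2, coeff_zero]
    rw [mul_sub, ← mul_assoc, mul_left_comm]
    exact dvd_sub (hdvd.mul_right u) (dvd_mul_right _ _)
  refine (hdual _ (fun h => hi ?_) horth).trans
    (card_le_card_of_injOn (fun i => ((-i : Fin n) : ℕ)) (fun _ hi => by simpa using hi) ?_)
  · simpa using congrFun h (-i)
  · exact fun a _ b _ hab => neg_injective (Fin.val_injective hab)

lemma min_le_card_image_mod_support_union (hn : 0 < n)
    (hC : ∀ u : R[X], (fun i : Fin n => ((f * u) %ₘ (X ^ n - 1)).coeff i) ≠ 0 →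
      d₁ ≤ #{i : Fin n | ((f * u) %ₘ (X ^ n - 1)).coeff i ≠ 0})
    (hdual : ∀ v : Fin n → R, v ≠ 0 →
      (∀ u : R[X], ∑ i : Fin n, v i * ((f * u) %ₘ (X ^ n - 1)).coeff i = 0) →
      d₂ ≤ #{i | v i ≠ 0})
    (t : ℕ) {w : R[X]} (hw : ¬X ^ n - 1 ∣ w) :
    min d₁ d₂ ≤ #((w * f).support.image (· % n) ∪ (w * X ^ t).support.image (· % n)) := by
  have hmonic := monic_X_pow_sub_one (R := R) hn
  by_cases hcode : (f * w) %ₘ (X ^ n - 1) = 0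
  · set ρ := (w * X ^ t) %ₘ (X ^ n - 1) with hρ_def
    have hρ : ρ ≠ 0 := fun h => hw <| (isCoprime_X_pow_sub_one_X_pow hn t).dvd_of_dvd_mul_right
      ((modByMonic_eq_zero_iff_dvd hmonic).1 h)
    have hdvd : X ^ n - 1 ∣ ρ * f := by
      have : ρ * f = X ^ t * (f * w) - (X ^ n - 1) * ((w * X ^ t) /ₘ (X ^ n - 1) * f) := by
        rw [hρ_def, modByMonic_eq_sub_mul_div]
        ring
      rw [this]
      exact dvd_sub (((modByMonic_eq_zero_iff_dvd hmonic).1 hcode).mul_left _) (dvd_mul_right _ _)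
    calc min d₁ d₂ ≤ d₂ := min_le_right _ _
      _ ≤ #ρ.support := le_card_support_of_dvd_mul hn hdual hρ
          (natDegree_modByMonic_X_pow_sub_one_lt hn _) hdvd
      _ ≤ _ := card_le_card ((support_modByMonic_X_pow_sub_one_subset hn _).trans
          subset_union_right)
  · calc min d₁ d₂ ≤ d₁ := min_le_left _ _
      _ ≤ #((f * w) %ₘ (X ^ n - 1)).support := le_card_support_of_modByMonic_ne_zero hn hC hcode
      _ ≤ _ := card_le_card ((support_modByMonic_X_pow_sub_one_subset hn _).trans
          (mul_comm f w ▸ subset_union_left))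

end CyclicCode

theorem stmt_7_general (F : Type*) [Field F]
    (n k : ℕ)
    (f : Polynomial F) (hdeg : f.natDegree = n - k)
    (hβ0 : f.coeff 0 ≠ 0)
    (d₁ d₂ : ℕ)
    (hC : ∀ u : Polynomial F,
      (fun i : Fin n => ((f * u) %ₘ (X ^ n - 1)).coeff i) ≠ 0 →
      d₁ ≤ (Finset.univ.filter fun i : Fin n =>
              ((f * u) %ₘ (X ^ n - 1)).coeff i ≠ 0).card)
    (hdual : ∀ v : Fin n → F, v ≠ 0 →
      (∀ u : Polynomial F,
        ∑ i : Fin n, v i * ((f * u) %ₘ (X ^ n - 1)).coeff i = 0) →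
      d₂ ≤ (Finset.univ.filter fun i => v i ≠ 0).card)
    (t : ℕ) (ht0 : 0 < t) (htr : t < n - k)
    (u : Polynomial F) (hu : u ≠ 0) :
    min d₁ d₂ + 2 ≤
      (u * (f - C (f.coeff t) * X ^ t + X ^ t)).support.card +
      (u * (f - C (f.coeff t) * X ^ t)).support.card := by
  have hn : 0 < n := by omega
  obtain ⟨m, w, hw, rfl⟩ := WfDvdMonoid.max_power_factor' hu
    (not_isUnit_of_degree_pos _ (by rw [degree_X_pow_sub_one hn]; exact_mod_cast hn))
  have hw0 : w ≠ 0 := right_ne_zero_of_mul hu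
  have hd := min_le_card_image_mod_support_union hn hC hdual t hw
  rw [mul_assoc, mul_assoc, mul_add]
  set P := w * (f - C (f.coeff t) * X ^ t)
  set Q := w * X ^ t
  have hwf : w * f = P + C (f.coeff t) * Q := by ring
  rw [hwf, ← image_union] at hd
  rcases m with _ | m
  · simp only [pow_zero, one_mul]
    have hends : 2 ≤ #((w * f).support \ Q.support) :=
      two_le_card_support_mul_sdiff_support_mul_X_pow hw0 hβ0 ht0 (hdeg ▸ htr)
    rw [hwf] at hends
    have hsplit := card_support_sdiff_add_card_support_union_le P Q (f.coeff t)
    have hcover := hd.trans card_image_le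
    omega
  · have hcoeff : (f - C (f.coeff t) * X ^ t).coeff 0 ≠ 0 ∧
        (f - C (f.coeff t) * X ^ t + X ^ t).coeff 0 ≠ 0 := by simpa [ht0.ne] using hβ0
    have hP : P ≠ 0 := mul_ne_zero hw0 fun h => hcoeff.1 (by rw [h, coeff_zero])
    have hPQ : P + Q ≠ 0 := by
      rw [← mul_add]
      exact mul_ne_zero hw0 fun h => hcoeff.2 (by rw [h, coeff_zero])
    have hwt₁ := two_mul_card_image_mod_support_le_pow_succ hn (P + Q) m
    have hwt₂ := two_mul_card_image_mod_support_le_pow_succ hn P m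
    have hcover := hd.trans (card_le_card ((image_subset_image
      (support_add_C_mul_union_subset P Q (f.coeff t))).trans (image_union _ _).subset))
    have := card_union_le ((P + Q).support.image (· % n)) (P.support.image (· % n))
    have := (support_nonempty.2 hP).image (· % n) |>.card_pos
    have := (support_nonempty.2 hPQ).image (· % n) |>.card_pos
    omega

/-- Let `F` be a field of characteristic `2`, `n > k ≥ 1`, `r = n - k`, and let
`f = ∑ βᵢ Xⁱ` be a degree-`r` divisor of `Xⁿ - 1` with `β₀ ≠ 0` and `β_r ≠ 0`.
Let `C` be the cyclic code of length `n` generated by `f` (codewords being the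
coefficient vectors of `f·u mod (Xⁿ - 1)`), assume every nonzero codeword of `C`
has Hamming weight at least `d₁` and every nonzero codeword of the dual of `C`
has Hamming weight at least `d₂`, and set `d = min d₁ d₂`.  Fix `0 < t < r` and
put `ĝ₁ = f - β_t Xᵗ + Xᵗ`, `ĝ₂ = f - β_t Xᵗ`.  Then for every nonzero
`u ∈ F[X]`, `wt(u·ĝ₁) + wt(u·ĝ₂) ≥ d + 2`, i.e. the free distance of the `(2,1)`
convolutional code with generator matrix `(ĝ₁, ĝ₂)` is at least `d + 2`. -/
theorem stmt_7 (F : Type*) [Field F] [CharP F 2]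
    (n k : ℕ) (hk : 1 ≤ k) (hkn : k < n)
    (f : Polynomial F) (hdeg : f.natDegree = n - k)
    (hβ0 : f.coeff 0 ≠ 0) (hβr : f.coeff (n - k) ≠ 0)
    (hdvd : f ∣ X ^ n - 1)
    (d₁ d₂ : ℕ)
    (hC : ∀ u : Polynomial F,
      (fun i : Fin n => ((f * u) %ₘ (X ^ n - 1)).coeff i) ≠ 0 →
      d₁ ≤ (Finset.univ.filter fun i : Fin n =>
              ((f * u) %ₘ (X ^ n - 1)).coeff i ≠ 0).card)
    (hdual : ∀ v : Fin n → F, v ≠ 0 →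
      (∀ u : Polynomial F,
        ∑ i : Fin n, v i * ((f * u) %ₘ (X ^ n - 1)).coeff i = 0) →
      d₂ ≤ (Finset.univ.filter fun i => v i ≠ 0).card)
    (t : ℕ) (ht0 : 0 < t) (htr : t < n - k)
    (u : Polynomial F) (hu : u ≠ 0) :
    min d₁ d₂ + 2 ≤
      (u * (f - C (f.coeff t) * X ^ t + X ^ t)).support.card +
      (u * (f - C (f.coeff t) * X ^ t)).support.card :=
  stmt_7_general F n k f hdeg hβ0 d₁ d₂ hC hdual t ht0 htr u hu
end

section
/- Let F be the field with 4 elements and let ω ∈ F satisfy ω² + ω + 1 = 0. Let g₁ = ω + ωX + ω²X² and g₂ = ω² + ωX + ω²X² in F[X]. Then the free distance of the (2,1) convolutional code with generator matrix G = (g₁, g₂) equals 6; that is, the minimum of wt(u·g₁) + wt(u·g₂) over all nonzero polynomials u ∈ F[X] is exactly 6. (Since this code has degree δ = 2 and the maximal possible free distance of a length-2, dimension-1, degree-2 convolutional code is 2δ + 2 = 6, the code is maximum distance separable.) -/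
open Polynomial


private lemma coeff_mul_quad {F : Type*} [Field F] (u : Polynomial F) (a b c : F) (k : ℕ) :
    (u * (C a + C b * X + C c * X ^ 2)).coeff k
      = a * u.coeff k + b * (if 1 ≤ k then u.coeff (k - 1) else 0)
        + c * (if 2 ≤ k then u.coeff (k - 2) else 0) := by
  have h : u * (C a + C b * X + C c * X ^ 2)
      = C a * u + C b * (u * X ^ 1) + C c * (u * X ^ 2) := by ring
  rw [h]
  simp only [coeff_add, coeff_C_mul, coeff_mul_X_pow', pow_one]
  have hx : (u * X).coeff k = if 1 ≤ k then u.coeff (k - 1) else 0 := by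
    rw [← pow_one (X : Polynomial F)]; exact coeff_mul_X_pow' u 1 k
  rw [hx]

private lemma two_le_card {S : Finset ℕ} {a b : ℕ} (ha : a ∈ S) (hb : b ∈ S) (hab : a ≠ b) :
    2 ≤ S.card := Finset.one_lt_card.mpr ⟨a, ha, b, hb, hab⟩

private lemma three_le_card {S : Finset ℕ} {a b c : ℕ} (ha : a ∈ S) (hb : b ∈ S) (hc : c ∈ S)
    (hab : a ≠ b) (hac : a ≠ c) (hbc : b ≠ c) : 3 ≤ S.card := by
  have hsub : ({a, b, c} : Finset ℕ) ⊆ S := by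
    intro x hx; simp only [Finset.mem_insert, Finset.mem_singleton] at hx
    rcases hx with rfl | rfl | rfl <;> assumption
  have h3 : ({a, b, c} : Finset ℕ).card = 3 := by
    rw [Finset.card_insert_of_notMem (by simp [hab, hac]),
      Finset.card_insert_of_notMem (by simp [hbc]), Finset.card_singleton]
  have := Finset.card_le_card hsub
  omega

private lemma four_le_card {S : Finset ℕ} {a b c d : ℕ} (ha : a ∈ S) (hb : b ∈ S) (hc : c ∈ S)
    (hd : d ∈ S) (hab : a ≠ b) (hac : a ≠ c) (had : a ≠ d) (hbc : b ≠ c) (hbd : b ≠ d)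
    (hcd : c ≠ d) : 4 ≤ S.card := by
  have hsub : ({a, b, c, d} : Finset ℕ) ⊆ S := by
    intro x hx; simp only [Finset.mem_insert, Finset.mem_singleton] at hx
    rcases hx with rfl | rfl | rfl | rfl <;> assumption
  have h4 : ({a, b, c, d} : Finset ℕ).card = 4 := by
    rw [Finset.card_insert_of_notMem (by simp [hab, hac, had]),
      Finset.card_insert_of_notMem (by simp [hbc, hbd]),
      Finset.card_insert_of_notMem (by simp [hcd]), Finset.card_singleton]
  have := Finset.card_le_card hsub
  omega

private lemma card_support_X_mul {F : Type*} [Field F] (p : Polynomial F) :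
    (X * p).support.card = p.support.card := by
  have h : (X * p).support = p.support.image (· + 1) := by
    ext n
    rcases n with _ | n
    · simp [mem_support_iff, coeff_X_mul]
    · simp [mem_support_iff, coeff_X_mul]
  rw [h, Finset.card_image_of_injective _ (add_left_injective 1)]

private lemma main_lb {F : Type*} [Field F] (ω : F) (hω : ω ^ 2 + ω + 1 = 0)
    (h2 : (2 : F) = 0) : ∀ (n : ℕ) (u : Polynomial F), u.natDegree = n → u ≠ 0 →
    6 ≤ (u * (C ω + C ω * X + C (ω ^ 2) * X ^ 2)).support.card
        + (u * (C (ω ^ 2) + C ω * X + C (ω ^ 2) * X ^ 2)).support.card := by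
  have hω0 : ω ≠ 0 := by
    rintro rfl; rw [zero_pow (by norm_num), add_zero, zero_add] at hω
    exact one_ne_zero hω
  have hω20 : ω ^ 2 ≠ 0 := pow_ne_zero 2 hω0
  intro n
  induction n using Nat.strong_induction_on with
  | _ n ih =>
    intro u hn hu
    by_cases h0 : u.coeff 0 = 0
    · obtain ⟨v, rfl⟩ := X_dvd_iff.mpr h0
      have hv : v ≠ 0 := by rintro rfl; simp at hu
      have hdeg : v.natDegree < n := by
        have hX : (X * v).natDegree = 1 + v.natDegree := by
          rw [natDegree_mul X_ne_zero hv, natDegree_X]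
        omega
      have := ih v.natDegree hdeg v rfl hv
      rw [mul_assoc, mul_assoc, card_support_X_mul, card_support_X_mul]
      exact this
    · -- u.coeff 0 ≠ 0
      set g1 : Polynomial F := C ω + C ω * X + C (ω ^ 2) * X ^ 2 with hg1
      set g2 : Polynomial F := C (ω ^ 2) + C ω * X + C (ω ^ 2) * X ^ 2 with hg2
      have cA : ∀ k, (u * g1).coeff k = ω * u.coeff k
          + ω * (if 1 ≤ k then u.coeff (k - 1) else 0)
          + ω ^ 2 * (if 2 ≤ k then u.coeff (k - 2) else 0) := fun k =>
        coeff_mul_quad u ω ω (ω ^ 2) k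
      have cB : ∀ k, (u * g2).coeff k = ω ^ 2 * u.coeff k
          + ω * (if 1 ≤ k then u.coeff (k - 1) else 0)
          + ω ^ 2 * (if 2 ≤ k then u.coeff (k - 2) else 0) := fun k =>
        coeff_mul_quad u (ω ^ 2) ω (ω ^ 2) k
      by_cases hd0 : u.natDegree = 0
      · -- constant u
        have hc1 : u.coeff 1 = 0 := coeff_eq_zero_of_natDegree_lt (by omega)
        have hc2 : u.coeff 2 = 0 := coeff_eq_zero_of_natDegree_lt (by omega)
        have hA0 : (u * g1).coeff 0 ≠ 0 := by
          rw [cA 0]; simp only [if_neg (by omega : ¬ 1 ≤ 0), if_neg (by omega : ¬ 2 ≤ 0)]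
          simpa using mul_ne_zero hω0 h0
        have hA1 : (u * g1).coeff 1 ≠ 0 := by
          rw [cA 1]; simp only [if_pos (le_refl 1), if_neg (by omega : ¬ 2 ≤ 1), hc1]
          simpa using mul_ne_zero hω0 h0
        have hA2 : (u * g1).coeff 2 ≠ 0 := by
          rw [cA 2]; simp only [if_pos (by omega : 1 ≤ 2), if_pos (le_refl 2), hc2, hc1]
          simpa using mul_ne_zero hω20 h0
        have hB0 : (u * g2).coeff 0 ≠ 0 := by
          rw [cB 0]; simp only [if_neg (by omega : ¬ 1 ≤ 0), if_neg (by omega : ¬ 2 ≤ 0)]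
          simpa using mul_ne_zero hω20 h0
        have hB1 : (u * g2).coeff 1 ≠ 0 := by
          rw [cB 1]; simp only [if_pos (le_refl 1), if_neg (by omega : ¬ 2 ≤ 1), hc1]
          simpa using mul_ne_zero hω0 h0
        have hB2 : (u * g2).coeff 2 ≠ 0 := by
          rw [cB 2]; simp only [if_pos (by omega : 1 ≤ 2), if_pos (le_refl 2), hc2, hc1]
          simpa using mul_ne_zero hω20 h0
        have h3A := three_le_card (mem_support_iff.mpr hA0) (mem_support_iff.mpr hA1)
          (mem_support_iff.mpr hA2) (by omega) (by omega) (by omega)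
        have h3B := three_le_card (mem_support_iff.mpr hB0) (mem_support_iff.mpr hB1)
          (mem_support_iff.mpr hB2) (by omega) (by omega) (by omega)
        omega
      · -- natDegree u = d ≥ 1
        set d := u.natDegree with hdd
        have hd1 : 1 ≤ d := Nat.pos_of_ne_zero hd0
        have hud : u.coeff d ≠ 0 := fun h => hu (leadingCoeff_eq_zero.mp h)
        have hcd1 : u.coeff (d + 1) = 0 := coeff_eq_zero_of_natDegree_lt (by omega)
        have hcd2 : u.coeff (d + 2) = 0 := coeff_eq_zero_of_natDegree_lt (by omega)
        by_contra hcon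
        push_neg at hcon
        have hcon5 : (u * g1).support.card + (u * g2).support.card ≤ 5 := by omega
        -- memberships at 0 and d+2
        have hA0 : (u * g1).coeff 0 ≠ 0 := by
          rw [cA 0]; simp only [if_neg (by omega : ¬ 1 ≤ 0), if_neg (by omega : ¬ 2 ≤ 0)]
          simpa using mul_ne_zero hω0 h0
        have hB0 : (u * g2).coeff 0 ≠ 0 := by
          rw [cB 0]; simp only [if_neg (by omega : ¬ 1 ≤ 0), if_neg (by omega : ¬ 2 ≤ 0)]
          simpa using mul_ne_zero hω20 h0
        have hAtop : (u * g1).coeff (d + 2) ≠ 0 := by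
          rw [cA (d + 2)]
          simp only [if_pos (by omega : 1 ≤ d + 2), if_pos (by omega : 2 ≤ d + 2),
            show d + 2 - 1 = d + 1 by omega, show d + 2 - 2 = d by omega, hcd1, hcd2]
          simpa using mul_ne_zero hω20 hud
        have hBtop : (u * g2).coeff (d + 2) ≠ 0 := by
          rw [cB (d + 2)]
          simp only [if_pos (by omega : 1 ≤ d + 2), if_pos (by omega : 2 ≤ d + 2),
            show d + 2 - 1 = d + 1 by omega, show d + 2 - 2 = d by omega, hcd1, hcd2]
          simpa using mul_ne_zero hω20 hud
        have m0A : 0 ∈ (u * g1).support := mem_support_iff.mpr hA0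
        have m0B : 0 ∈ (u * g2).support := mem_support_iff.mpr hB0
        have mtA : d + 2 ∈ (u * g1).support := mem_support_iff.mpr hAtop
        have mtB : d + 2 ∈ (u * g2).support := mem_support_iff.mpr hBtop
        -- A + B = u coefficientwise
        have key : ∀ k, (u * g1).coeff k + (u * g2).coeff k = u.coeff k := by
          intro k
          rw [cA k, cB k]
          linear_combination u.coeff k * hω
            + (ω * (if 1 ≤ k then u.coeff (k - 1) else 0)
              + ω ^ 2 * (if 2 ≤ k then u.coeff (k - 2) else 0) - u.coeff k) * h2
        have hdmid : (u * g1).coeff d ≠ 0 ∨ (u * g2).coeff d ≠ 0 := by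
          by_contra h
          push_neg at h
          have := key d
          rw [h.1, h.2, add_zero] at this
          exact hud this.symm
        -- all middle coefficients except at d vanish
        have hmidA : ∀ k, k ≠ 0 → k ≠ d → k ≠ d + 2 → (u * g1).coeff k = 0 := by
          intro k hk0 hkd hkt
          by_contra hAk
          have mkA : k ∈ (u * g1).support := mem_support_iff.mpr hAk
          rcases hdmid with hA | hB
          · have mdA : d ∈ (u * g1).support := mem_support_iff.mpr hA
            have := four_le_card m0A mkA mdA mtA (Ne.symm hk0) (by omega) (by omega)
              hkd hkt (by omega)
            have := two_le_card m0B mtB (by omega)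
            omega
          · have mdB : d ∈ (u * g2).support := mem_support_iff.mpr hB
            have := three_le_card m0A mkA mtA (Ne.symm hk0) (by omega) hkt
            have := three_le_card m0B mdB mtB (by omega) (by omega) (by omega)
            omega
        have hmidB : ∀ k, k ≠ 0 → k ≠ d → k ≠ d + 2 → (u * g2).coeff k = 0 := by
          intro k hk0 hkd hkt
          by_contra hBk
          have mkB : k ∈ (u * g2).support := mem_support_iff.mpr hBk
          rcases hdmid with hA | hB
          · have mdA : d ∈ (u * g1).support := mem_support_iff.mpr hA
            have := three_le_card m0A mdA mtA (by omega) (by omega) (by omega)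
            have := three_le_card m0B mkB mtB (Ne.symm hk0) (by omega) hkt
            omega
          · have mdB : d ∈ (u * g2).support := mem_support_iff.mpr hB
            have := four_le_card m0B mkB mdB mtB (Ne.symm hk0) (by omega) (by omega)
              hkd hkt (by omega)
            have := two_le_card m0A mtA (by omega)
            omega
        -- the combination ω·A + B = X·(u·(1 + ωX))
        have hωP : (C ω) ^ 2 + C ω + 1 = (0 : Polynomial F) := by
          rw [← C_1, ← C_pow, ← C_add, ← C_add, hω, C_0]
        have h2P : (2 : Polynomial F) = 0 := by
          rw [← C_0, ← h2]; simp [map_ofNat]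
        have hpoly : C ω * (u * g1) + u * g2 = X * (u * (1 + C ω * X)) := by
          rw [hg1, hg2, show C (ω ^ 2) = C ω ^ 2 from C_pow]
          linear_combination (u * X + C ω * u * X ^ 2) * hωP
            + (C ω ^ 2 * u - u * X - C ω * u * X ^ 2) * h2P
        have hP : ∀ k, ω * (u * g1).coeff k + (u * g2).coeff k
            = (X * (u * (1 + C ω * X))).coeff k := by
          intro k
          rw [← coeff_C_mul, ← coeff_add, hpoly]
        have hw0 : (u * (1 + C ω * X)).coeff 0 = u.coeff 0 := by
          rw [mul_coeff_zero]; simp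
        have hwzero : ∀ m, m + 1 ≠ d → m + 1 ≠ d + 2 → (u * (1 + C ω * X)).coeff m = 0 := by
          intro m hm1 hm2
          have h := hP (m + 1)
          rw [coeff_X_mul, hmidA _ (by omega) hm1 hm2, hmidB _ (by omega) hm1 hm2] at h
          rw [← h]; ring
        have hdeq : d = 1 := by
          by_contra hne
          have := hwzero 0 (by omega) (by omega)
          rw [hw0] at this
          exact h0 this
        -- extract u.coeff 1 relation
        have hwform : u * (1 + C ω * X) = u * (C 1 + C ω * X + C 0 * X ^ 2) := by
          rw [C_1, C_0]; ring
        have hu1 : u.coeff 1 + ω * u.coeff 0 = 0 := by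
          have h := hwzero 1 (by omega) (by omega)
          rw [hwform, coeff_mul_quad] at h
          simp only [if_pos (le_refl 1), if_neg (by omega : ¬ 2 ≤ 1)] at h
          linear_combination h
        have hc2 : u.coeff 2 = 0 := coeff_eq_zero_of_natDegree_lt (by omega)
        have hc3 : u.coeff 3 = 0 := coeff_eq_zero_of_natDegree_lt (by omega)
        -- final contradiction: both supports contain 0, 1, 3
        have hA1 : (u * g1).coeff 1 = u.coeff 0 := by
          rw [cA 1]
          simp only [if_pos (le_refl 1), if_neg (by omega : ¬ 2 ≤ 1)]
          linear_combination ω * hu1 - u.coeff 0 * hω + ω * u.coeff 0 * h2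
        have hA3 : (u * g1).coeff 3 = u.coeff 0 := by
          rw [cA 3]
          simp only [if_pos (by omega : 1 ≤ 3), if_pos (by omega : 2 ≤ 3),
            show 3 - 1 = 2 by omega, show 3 - 2 = 1 by omega, hc3, hc2]
          linear_combination ω ^ 2 * hu1 - u.coeff 0 * (ω - 1) * hω - u.coeff 0 * h2
        have hB1 : (u * g2).coeff 1 = ω ^ 2 * u.coeff 0 := by
          rw [cB 1]
          simp only [if_pos (le_refl 1), if_neg (by omega : ¬ 2 ≤ 1)]
          linear_combination ω ^ 2 * hu1 - u.coeff 0 * ω * hω + u.coeff 0 * ω * h2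
        have hB3 : (u * g2).coeff 3 = u.coeff 0 := by
          rw [cB 3]
          simp only [if_pos (by omega : 1 ≤ 3), if_pos (by omega : 2 ≤ 3),
            show 3 - 1 = 2 by omega, show 3 - 2 = 1 by omega, hc3, hc2]
          linear_combination ω ^ 2 * hu1 - u.coeff 0 * (ω - 1) * hω - u.coeff 0 * h2
        have h3A := three_le_card m0A (mem_support_iff.mpr (hA1 ▸ h0))
          (mem_support_iff.mpr (hA3 ▸ h0)) (by omega) (by omega) (by omega)
        have h3B := three_le_card m0B
          (mem_support_iff.mpr (hB1 ▸ mul_ne_zero hω20 h0))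
          (mem_support_iff.mpr (hB3 ▸ h0)) (by omega) (by omega) (by omega)
        omega


private lemma card_g {F : Type*} [Field F] (ω : F) (hω : ω ≠ 0) (hω2 : ω ^ 2 ≠ 0) (a : F)
    (ha : a ≠ 0) : (C a + C ω * X + C (ω ^ 2) * X ^ 2 : Polynomial F).support.card = 3 := by
  set g : Polynomial F := C a + C ω * X + C (ω ^ 2) * X ^ 2 with hg
  have hgs : g = 1 * (C a + C ω * X + C (ω ^ 2) * X ^ 2) := by rw [one_mul]
  have hc : ∀ k, g.coeff k = a * (1 : Polynomial F).coeff k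
      + ω * (if 1 ≤ k then (1 : Polynomial F).coeff (k - 1) else 0)
      + ω ^ 2 * (if 2 ≤ k then (1 : Polynomial F).coeff (k - 2) else 0) := by
    intro k; rw [hgs]; exact coeff_mul_quad 1 a ω (ω ^ 2) k
  have h0 : g.coeff 0 ≠ 0 := by rw [hc 0]; simpa using ha
  have h1 : g.coeff 1 ≠ 0 := by
    rw [hc 1]
    simp only [if_pos (le_refl 1), if_neg (by omega : ¬ 2 ≤ 1)]
    simpa [coeff_one] using hω
  have h2 : g.coeff 2 ≠ 0 := by
    rw [hc 2]
    simp only [if_pos (by omega : 1 ≤ 2), if_pos (le_refl 2)]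
    simpa [coeff_one] using hω2
  have h3 : 3 ≤ g.support.card := by
    refine le_trans ?_ (Finset.card_le_card (show ({0, 1, 2} : Finset ℕ) ⊆ g.support from ?_))
    · simp
    · intro x hx
      simp only [Finset.mem_insert, Finset.mem_singleton] at hx
      rcases hx with rfl | rfl | rfl <;> exact mem_support_iff.mpr ‹_›
  have hle : g.natDegree ≤ 2 := by rw [hg]; compute_degree
  have hcard := card_supp_le_succ_natDegree g
  omega

/-- Let `F` be the field with `4` elements and `ω ∈ F` with `ω² + ω + 1 = 0`.
The free distance of the `(2,1)` convolutional code with generator matrix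
`(ω + ωX + ω²X², ω² + ωX + ω²X²)` equals `6`: the minimum of
`wt(u·g₁) + wt(u·g₂)` over all nonzero `u ∈ F[X]` is exactly `6`.  (Such a code,
having degree `δ = 2`, is maximum distance separable.) -/
theorem stmt_9 (F : Type*) [Field F] [Fintype F] (hF : Fintype.card F = 4)
    (ω : F) (hω : ω ^ 2 + ω + 1 = 0) :
    IsLeast {d : ℕ | ∃ u : Polynomial F, u ≠ 0 ∧
      d = (u * (C ω + C ω * X + C (ω ^ 2) * X ^ 2)).support.card
        + (u * (C (ω ^ 2) + C ω * X + C (ω ^ 2) * X ^ 2)).support.card}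
      6 := by
  have h2F : (2 : F) = 0 := by
    have h := FiniteField.cast_card_eq_zero (K := F)
    rw [hF] at h
    have h4 : ((4 : ℕ) : F) = (4 : F) := by norm_num
    have hsq : (2 : F) ^ 2 = 0 := by rw [← h, h4]; norm_num
    exact pow_eq_zero_iff (by norm_num) |>.mp hsq
  have hω0 : ω ≠ 0 := by
    rintro rfl; rw [zero_pow (by norm_num), add_zero, zero_add] at hω
    exact one_ne_zero hω
  have hω20 : ω ^ 2 ≠ 0 := pow_ne_zero 2 hω0
  constructor
  · refine ⟨1, one_ne_zero, ?_⟩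
    rw [one_mul, one_mul, card_g ω hω0 hω20 ω hω0, card_g ω hω0 hω20 (ω ^ 2) hω20]
  · rintro d ⟨u, hu, rfl⟩
    exact main_lb ω hω h2F u.natDegree u rfl hu
end

section
/- Over GF(2) = ℤ/2ℤ, let M₀ be the 2 × 4 matrix with rows (0,1,1,1) and (1,0,1,1), let M₁ be the 2 × 4 matrix with rows (1,0,1,0) and (0,1,0,1), and let M₂ be the 2 × 4 matrix with rows (0,1,0,1) and (1,0,1,0). Then the free distance of the (4,2) convolutional code with generator matrix G(X) = M₀ + M₁·X + M₂·X² over GF(2)[X] equals 6; that is, the minimum of wt(u·G(X)) over all nonzero row vectors u ∈ (GF(2)[X])² is exactly 6. -/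
open Polynomial

/-!
Reading `G(X)` column by column, a message `(a, b)` is encoded as
`(aX + b(1+X²), a(1+X²) + bX, a(1+X) + b(1+X²), a(1+X²) + b(1+X))`; the message `(1, X)` gives
`(X³, 1, 1+X³, 1+X)`, of weight `6`. For the lower bound, a nonzero multiple of a polynomial
that is not a monomial has weight at least `2`, and in characteristic `2` the last two
entries are `(a + b(1+X))(1+X)` and `(b + a(1+X))(1+X)`. If every entry is nonzero this
already gives `1 + 1 + 2 + 2`. If one entry vanishes, solving for `a` in terms of `b`
(or the other way round) makes the other three entries nonzero multiples of `1+X`,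
`1+X²+X³` or `1+X²+X⁴`, of weight at least `2` each. Swapping `a` and `b` permutes the
entries, which halves the case analysis.
-/

section Weight

variable {R : Type*} [Semiring R]

def weight {ι : Type*} [Fintype ι] (v : ι → R[X]) : ℕ := ∑ j, (v j).support.card

lemma natTrailingDegree_lt_natDegree_of_coeff_ne_zero {g : R[X]} {n : ℕ} (hn : 0 < n)
    (h0 : g.coeff 0 ≠ 0) (h : g.coeff n ≠ 0) : g.natTrailingDegree < g.natDegree := by
  rw [natTrailingDegree_eq_zero.mpr (Or.inr h0)]
  exact hn.trans_le (le_natDegree_of_ne_zero h)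

lemma two_le_card_support_mul [NoZeroDivisors R] {b g : R[X]} (hb : b ≠ 0)
    (hg : g.natTrailingDegree < g.natDegree) : 2 ≤ (b * g).support.card := by
  have hg0 : g ≠ 0 := by rintro rfl; simp at hg
  have hbg : b * g ≠ 0 := mul_ne_zero hb hg0
  have hlt : (b * g).natTrailingDegree < (b * g).natDegree := by
    rw [natTrailingDegree_mul hb hg0, natDegree_mul hb hg0]
    exact add_lt_add_of_le_of_lt (natTrailingDegree_le_natDegree b) hg
  exact Finset.one_lt_card.mpr ⟨_, natTrailingDegree_mem_support_of_nonzero hbg,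
    _, natDegree_mem_support_of_nonzero hbg, hlt.ne⟩

lemma card_support_one_add_X_pow [Nontrivial R] {n : ℕ} (hn : n ≠ 0) :
    (1 + X ^ n : R[X]).support.card = 2 := by
  simpa using card_support_binomial (R := R) hn.symm one_ne_zero one_ne_zero

end Weight

namespace ConvolutionalCode

local notation "F" => (ZMod 2)[X]

noncomputable def generator : Matrix (Fin 2) (Fin 4) F :=
  (!![0,1,1,1; 1,0,1,1] : Matrix (Fin 2) (Fin 4) (ZMod 2)).map C
    + (X ^ 1 : F) • (!![1,0,1,0; 0,1,0,1] : Matrix (Fin 2) (Fin 4) (ZMod 2)).map C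
    + (X ^ 2 : F) • (!![0,1,0,1; 1,0,1,0] : Matrix (Fin 2) (Fin 4) (ZMod 2)).map C

noncomputable def encode (a b : F) : Fin 4 → F :=
  ![a * X + b * (1 + X ^ 2), a * (1 + X ^ 2) + b * X,
    a * (1 + X) + b * (1 + X ^ 2), a * (1 + X ^ 2) + b * (1 + X)]

lemma vecMul_generator (u : Fin 2 → F) : Matrix.vecMul u generator = encode (u 0) (u 1) := by
  funext j
  fin_cases j <;> simp [generator, encode, Matrix.vecMul, dotProduct]

lemma weight_encode (a b : F) :
    weight (encode a b) = (encode a b 0).support.card + (encode a b 1).support.card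
      + (encode a b 2).support.card + (encode a b 3).support.card :=
  Fin.sum_univ_four _

lemma encode_swap_zero (a b : F) : encode b a 0 = encode a b 1 := by
  simp [encode, add_comm]

lemma encode_swap_one (a b : F) : encode b a 1 = encode a b 0 := by
  simp [encode, add_comm]

lemma encode_swap_two (a b : F) : encode b a 2 = encode a b 3 := by
  simp [encode, add_comm]

lemma encode_swap_three (a b : F) : encode b a 3 = encode a b 2 := by
  simp [encode, add_comm]

lemma weight_encode_swap (a b : F) : weight (encode b a) = weight (encode a b) := by
  rw [weight_encode b a, encode_swap_zero a b, encode_swap_one a b, encode_swap_two a b,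
    encode_swap_three a b, weight_encode a b]
  ring

lemma encode_one_X : encode 1 X = ![X ^ 3, X ^ 0, 1 + X ^ 3, 1 + X ^ 1] := by
  have two : (2 : F) = 0 := CharTwo.two_eq_zero
  funext j
  fin_cases j <;> simp [encode]
  · linear_combination X * two
  · linear_combination X ^ 2 * two
  · linear_combination X * two
  · linear_combination X ^ 2 * two

lemma weight_encode_one_X : weight (encode 1 X) = 6 := by
  rw [weight_encode, encode_one_X]
  simp only [Matrix.cons_val, support_X_pow, Finset.card_singleton,
    card_support_one_add_X_pow three_ne_zero, card_support_one_add_X_pow one_ne_zero]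

lemma natTrailingDegree_lt_natDegree_one_add_X :
    (1 + X : F).natTrailingDegree < (1 + X : F).natDegree :=
  natTrailingDegree_lt_natDegree_of_coeff_ne_zero one_pos (by simp) (by simp [coeff_one])

lemma natTrailingDegree_lt_natDegree_one_add_X_sq_add_X_pow_three :
    (1 + X ^ 2 + X ^ 3 : F).natTrailingDegree < (1 + X ^ 2 + X ^ 3 : F).natDegree :=
  natTrailingDegree_lt_natDegree_of_coeff_ne_zero three_pos (by simp) (by simp [coeff_one])

lemma natTrailingDegree_lt_natDegree_one_add_X_sq_add_X_pow_four :
    (1 + X ^ 2 + X ^ 4 : F).natTrailingDegree < (1 + X ^ 2 + X ^ 4 : F).natDegree :=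
  natTrailingDegree_lt_natDegree_of_coeff_ne_zero four_pos (by simp) (by simp [coeff_one])

lemma one_add_X_ne_zero : (1 + X : F) ≠ 0 :=
  ne_zero_of_natDegree_gt natTrailingDegree_lt_natDegree_one_add_X

lemma encode_two_eq_mul (a b : F) : encode a b 2 = (a + b * (1 + X)) * (1 + X) := by
  have two : (2 : F) = 0 := CharTwo.two_eq_zero
  simp only [encode, Matrix.cons_val]
  linear_combination -b * X * two

lemma two_le_card_support_encode_two {a b : F} (h : encode a b 2 ≠ 0) :
    2 ≤ (encode a b 2).support.card := by
  rw [encode_two_eq_mul] at h ⊢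
  exact two_le_card_support_mul (left_ne_zero_of_mul h) natTrailingDegree_lt_natDegree_one_add_X

lemma six_le_weight_encode_of_encode_two_eq_zero {a b : F} (hab : a ≠ 0 ∨ b ≠ 0)
    (h : encode a b 2 = 0) : 6 ≤ weight (encode a b) := by
  have two : (2 : F) = 0 := CharTwo.two_eq_zero
  rw [encode_two_eq_mul, mul_eq_zero, or_iff_left one_add_X_ne_zero, CharTwo.add_eq_zero] at h
  subst h
  have hb : b ≠ 0 := by rintro rfl; simp at hab
  have e0 : encode (b * (1 + X)) b 0 = b * (1 + X) := by
    simp only [encode, Matrix.cons_val]; linear_combination b * X ^ 2 * two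
  have e1 : encode (b * (1 + X)) b 1 = b * (1 + X ^ 2 + X ^ 3) := by
    simp only [encode, Matrix.cons_val]; linear_combination b * X * two
  have e3 : encode (b * (1 + X)) b 3 = b * X ^ 2 * (1 + X) := by
    simp only [encode, Matrix.cons_val]; linear_combination b * (1 + X) * two
  have w0 : 2 ≤ (encode (b * (1 + X)) b 0).support.card := by
    rw [e0]; exact two_le_card_support_mul hb natTrailingDegree_lt_natDegree_one_add_X
  have w1 : 2 ≤ (encode (b * (1 + X)) b 1).support.card := by
    rw [e1]
    exact two_le_card_support_mul hb natTrailingDegree_lt_natDegree_one_add_X_sq_add_X_pow_three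
  have w3 : 2 ≤ (encode (b * (1 + X)) b 3).support.card := by
    rw [e3]
    exact two_le_card_support_mul (mul_ne_zero hb (pow_ne_zero 2 X_ne_zero))
      natTrailingDegree_lt_natDegree_one_add_X
  rw [weight_encode]
  omega

lemma two_le_card_support_encode_three {a b : F} (h : encode a b 3 ≠ 0) :
    2 ≤ (encode a b 3).support.card := by
  rw [← encode_swap_two] at h ⊢
  exact two_le_card_support_encode_two h

lemma six_le_weight_encode_of_encode_zero_eq_zero {a b : F} (hab : a ≠ 0 ∨ b ≠ 0)
    (h0 : encode a b 0 = 0) (h2 : encode a b 2 ≠ 0) (h3 : encode a b 3 ≠ 0) :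
    6 ≤ weight (encode a b) := by
  have two : (2 : F) = 0 := CharTwo.two_eq_zero
  have hb0 : b.coeff 0 = 0 := by simpa [encode, mul_coeff_zero] using congrArg (coeff · 0) h0
  obtain ⟨c, rfl⟩ := X_dvd_iff.mpr hb0
  have ha : a = c * (1 + X ^ 2) := by
    refine mul_right_cancel₀ X_ne_zero ?_
    simp only [encode, Matrix.cons_val] at h0
    linear_combination h0 - c * X * (1 + X ^ 2) * two
  subst ha
  have hc : c ≠ 0 := by rintro rfl; simp at hab
  have e1 : encode (c * (1 + X ^ 2)) (X * c) 1 = c * (1 + X ^ 2 + X ^ 4) := by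
    simp only [encode, Matrix.cons_val]; linear_combination c * X ^ 2 * two
  have w1 : 2 ≤ (encode (c * (1 + X ^ 2)) (X * c) 1).support.card := by
    rw [e1]
    exact two_le_card_support_mul hc natTrailingDegree_lt_natDegree_one_add_X_sq_add_X_pow_four
  have w2 := two_le_card_support_encode_two h2
  have w3 := two_le_card_support_encode_three h3
  rw [weight_encode]
  omega

lemma six_le_weight_encode {a b : F} (hab : a ≠ 0 ∨ b ≠ 0) : 6 ≤ weight (encode a b) := by
  by_cases h2 : encode a b 2 = 0
  · exact six_le_weight_encode_of_encode_two_eq_zero hab h2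
  by_cases h3 : encode a b 3 = 0
  · rw [← weight_encode_swap]
    exact six_le_weight_encode_of_encode_two_eq_zero hab.symm (by rwa [encode_swap_two])
  by_cases h0 : encode a b 0 = 0
  · exact six_le_weight_encode_of_encode_zero_eq_zero hab h0 h2 h3
  by_cases h1 : encode a b 1 = 0
  · rw [← weight_encode_swap]
    exact six_le_weight_encode_of_encode_zero_eq_zero hab.symm (by rwa [encode_swap_zero])
      (by rwa [encode_swap_two]) (by rwa [encode_swap_three])
  have w0 := card_support_eq_zero.not.mpr h0
  have w1 := card_support_eq_zero.not.mpr h1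
  have w2 := two_le_card_support_encode_two h2
  have w3 := two_le_card_support_encode_three h3
  rw [weight_encode]
  omega

end ConvolutionalCode

open ConvolutionalCode in
/-- Over `GF(2)`, let `M₀`, `M₁`, `M₂` be the `2 × 4` matrices with rows
`(0,1,1,1), (1,0,1,1)`; `(1,0,1,0), (0,1,0,1)`; and `(0,1,0,1), (1,0,1,0)`
respectively.  The free distance of the `(4,2)` convolutional code with
generator matrix `G(X) = M₀ + M₁ X + M₂ X²` equals `6`: the minimum of
`wt(u·G(X))` over all nonzero `u ∈ (GF(2)[X])²` is exactly `6`. -/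
theorem stmt_12 :
    IsLeast {d : ℕ | ∃ u : Fin 2 → Polynomial (ZMod 2), u ≠ 0 ∧
      d = ∑ j, (Matrix.vecMul u
        ((!![0,1,1,1; 1,0,1,1] : Matrix (Fin 2) (Fin 4) (ZMod 2)).map C
          + ((X : Polynomial (ZMod 2)) ^ 1) •
            (!![1,0,1,0; 0,1,0,1] : Matrix (Fin 2) (Fin 4) (ZMod 2)).map C
          + ((X : Polynomial (ZMod 2)) ^ 2) •
            (!![0,1,0,1; 1,0,1,0] :
              Matrix (Fin 2) (Fin 4) (ZMod 2)).map C) j).support.card}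
      6 := by
  change IsLeast {d | ∃ u : Fin 2 → (ZMod 2)[X], u ≠ 0 ∧
    d = weight (Matrix.vecMul u generator)} 6
  simp only [vecMul_generator]
  constructor
  · refine ⟨![1, X], fun h => one_ne_zero (congrFun h 0), ?_⟩
    simpa using weight_encode_one_X.symm
  · rintro d ⟨u, hu, rfl⟩
    refine six_le_weight_encode (not_and_or.mp fun h => hu ?_)
    funext i
    fin_cases i
    exacts [h.1, h.2]
end

section
/- Over GF(2) = ℤ/2ℤ, let I be the 4 × 4 identity matrix, let B be the 4 × 4 matrix with rows (0,1,1,1), (1,0,1,1), (1,1,0,1), (1,1,1,0), and let 0 denote the 4 × 4 zero matrix. Let (I | M) denote the 4 × 8 block matrix with left block I and right block M. Then the free distance of the (8,4) convolutional code with generator matrix G(X) = (I | B) + (I | 0)·X + (I | B)·X² over GF(2)[X] equals 9; that is, the minimum of wt(u·G(X)) over all nonzero row vectors u ∈ (GF(2)[X])⁴ is exactly 9. -/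
open Polynomial

namespace S14

abbrev R := Polynomial (ZMod 2)

noncomputable def a : R := 1 + X + X ^ 2
noncomputable def b : R := 1 + X ^ 2


lemma two_zero : (2 : R) = 0 := by
  have h : (2 : ZMod 2) = 0 := by decide
  calc (2 : R) = C (2 : ZMod 2) := by
        rw [show ((2:ZMod 2)) = (1:ZMod 2) + 1 from by decide, map_add, map_one]; norm_num
    _ = 0 := by rw [h, map_zero]

lemma zmod2_eq_one {x : ZMod 2} (h : x ≠ 0) : x = 1 := by
  revert h; revert x; decide

lemma eval_one_card (p : R) : p.eval 1 = (p.support.card : ZMod 2) := by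
  rw [eval_eq_sum, sum_def]
  simp only [one_pow, mul_one]
  rw [Finset.sum_congr rfl fun i hi => zmod2_eq_one (mem_support_iff.mp hi)]
  simp

lemma a_eq : a = C (1 : ZMod 2) * X ^ 0 + C 1 * X ^ 1 + C 1 * X ^ 2 := by
  simp [a]

lemma b_eq : b = C (1 : ZMod 2) * X ^ 0 + C 1 * X ^ 2 := by
  simp [b]

lemma a_supp : a.support = {0, 1, 2} := by
  rw [a_eq]; exact support_trinomial Nat.zero_lt_one Nat.one_lt_two one_ne_zero one_ne_zero one_ne_zero

lemma b_supp : b.support = {0, 2} := by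
  rw [b_eq]; exact support_binomial (by norm_num) one_ne_zero one_ne_zero

lemma a_card : a.support.card = 3 := by rw [a_supp]; rfl
lemma b_card : b.support.card = 2 := by rw [b_supp]; rfl

lemma a_ne : a ≠ 0 := by intro h; have := a_card; rw [h] at this; simp at this
lemma b_ne : b ≠ 0 := by intro h; have := b_card; rw [h] at this; simp at this

lemma a_td : a.natTrailingDegree = 0 := by
  have : a.natTrailingDegree ≤ 0 := natTrailingDegree_le_of_ne_zero (by simp [a])
  omega

lemma b_td : b.natTrailingDegree = 0 := by
  have : b.natTrailingDegree ≤ 0 := natTrailingDegree_le_of_ne_zero (by simp [b])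
  omega

lemma a_deg : a.natDegree = 2 := by unfold a; compute_degree!
lemma b_deg : b.natDegree = 2 := by unfold b; compute_degree!

lemma a_eval : a.eval 1 = 1 := by
  simp only [a, eval_add, eval_one, eval_pow, eval_X, one_pow]
  decide
lemma b_eval : b.eval 1 = 0 := by
  simp only [b, eval_add, eval_one, eval_pow, eval_X, one_pow]
  decide

-- generic: c nonzero with td 0, deg 2
lemma ge2 {c p : R} (hc : c ≠ 0) (htd : c.natTrailingDegree = 0) (hdeg : c.natDegree = 2)
    (hp : p ≠ 0) : 2 ≤ (c * p).support.card := by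
  have h1 : c * p ≠ 0 := mul_ne_zero hc hp
  have ht := natTrailingDegree_mem_support_of_nonzero h1
  have hd := natDegree_mem_support_of_nonzero h1
  have hlt : (c * p).natTrailingDegree < (c * p).natDegree := by
    rw [natTrailingDegree_mul hc hp, natDegree_mul hc hp, htd, hdeg]
    have := p.natTrailingDegree_le_natDegree
    omega
  exact Finset.one_lt_card.mpr ⟨_, ht, _, hd, Nat.ne_of_lt hlt⟩

lemma Age2 {p : R} (hp : p ≠ 0) : 2 ≤ (a * p).support.card := ge2 a_ne a_td a_deg hp
lemma Bge2 {p : R} (hp : p ≠ 0) : 2 ≤ (b * p).support.card := ge2 b_ne b_td b_deg hp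

lemma cast_mod (n : ℕ) (h : (n : ZMod 2) = 0) : n % 2 = 0 := by
  have := (ZMod.natCast_eq_zero_iff n 2).mp h
  omega

lemma cast_mod1 (n : ℕ) (h : (n : ZMod 2) = 1) : n % 2 = 1 := by
  rcases Nat.mod_two_eq_zero_or_one n with h0 | h1
  · exfalso
    have : (n : ZMod 2) = 0 := by
      have : (2 : ℕ) ∣ n := by omega
      exact (ZMod.natCast_eq_zero_iff n 2).mpr this
    rw [h] at this; exact one_ne_zero this
  · exact h1

lemma B_even (p : R) : (b * p).support.card % 2 = 0 := by
  apply cast_mod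
  rw [← eval_one_card, eval_mul, b_eval, zero_mul]

lemma A_par (p : R) : ((a * p).support.card : ZMod 2) = p.eval 1 := by
  rw [← eval_one_card, eval_mul, a_eval, one_mul]

lemma card2_eq {q : R} (h : q.support.card = 2) :
    q = X ^ q.natTrailingDegree + X ^ q.natDegree := by
  have hq : q ≠ 0 := by rintro rfl; simp at h
  have ht := natTrailingDegree_mem_support_of_nonzero hq
  have hd := natDegree_mem_support_of_nonzero hq
  have hne : q.natTrailingDegree ≠ q.natDegree := by
    intro he
    have hsub : q.support ⊆ {q.natDegree} := by
      intro n hn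
      have h1 := le_natDegree_of_mem_supp n hn
      have h2 := natTrailingDegree_le_of_mem_supp n hn
      rw [he] at h2
      simp only [Finset.mem_singleton]
      omega
    have := Finset.card_le_card hsub
    rw [h, Finset.card_singleton] at this
    omega
  have hsub : ({q.natTrailingDegree, q.natDegree} : Finset ℕ) ⊆ q.support := by
    intro n hn
    rcases Finset.mem_insert.mp hn with rfl | hn
    · exact ht
    · rw [Finset.mem_singleton.mp hn]; exact hd
  have hss : q.support = {q.natTrailingDegree, q.natDegree} :=
    (Finset.eq_of_subset_of_card_le hsub (by
      rw [h, Finset.card_insert_of_notMem (by simpa using hne), Finset.card_singleton])).symm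
  have hct : q.coeff q.natTrailingDegree = 1 := zmod2_eq_one (mem_support_iff.mp ht)
  have hcd : q.coeff q.natDegree = 1 := zmod2_eq_one (mem_support_iff.mp hd)
  conv_lhs => rw [as_sum_support q]
  rw [hss, Finset.sum_insert (by simpa using hne), Finset.sum_singleton, hct, hcd,
    ← X_pow_eq_monomial, ← X_pow_eq_monomial]

lemma not_22 {p : R} (hp : p ≠ 0) (hA : (a * p).support.card = 2)
    (hB : (b * p).support.card = 2) : False := by
  have eA := card2_eq hA
  have eB := card2_eq hB
  rw [natTrailingDegree_mul a_ne hp, natDegree_mul a_ne hp, a_td, a_deg, Nat.zero_add] at eA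
  rw [natTrailingDegree_mul b_ne hp, natDegree_mul b_ne hp, b_td, b_deg, Nat.zero_add] at eB
  have hab : a * p = b * p := by rw [eA, eB]
  have hx : (X : R) * p = 0 := by
    have : (a - b) * p = 0 := by rw [sub_mul, hab, sub_self]
    have habX : a - b = X := by unfold a b; ring
    rwa [habX] at this
  rcases mul_eq_zero.mp hx with h | h
  · exact X_ne_zero h
  · exact hp h

lemma AB5 {p : R} (hp : p ≠ 0) : 5 ≤ (a * p).support.card + (b * p).support.card := by
  have h2a := Age2 hp
  have h2b := Bge2 hp
  have hbe := B_even p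
  by_cases h1 : p.eval 1 = 1
  · have : (a * p).support.card % 2 = 1 := cast_mod1 _ (by rw [A_par, h1])
    omega
  · have h0 : p.eval 1 = 0 := by
      rcases (show ∀ x : ZMod 2, x = 0 ∨ x = 1 by decide) (p.eval 1) with h | h
      · exact h
      · exact absurd h h1
    have hae : (a * p).support.card % 2 = 0 := cast_mod _ (by rw [A_par, h0])
    have hne : ¬((a * p).support.card = 2 ∧ (b * p).support.card = 2) := by
      rintro ⟨x, y⟩; exact not_22 hp x y
    omega

lemma Kge2 (σ p : R) (hσ : σ ≠ 0) : 2 ≤ (a * p).support.card + (b * (p + σ)).support.card := by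
  by_cases hp : p = 0
  · subst hp
    rw [zero_add]
    have := Bge2 (p := σ) hσ
    omega
  · have := Age2 hp
    omega

lemma badK (σ p : R) (h : ¬(p = 0 ∨ p = σ)) :
    4 ≤ (a * p).support.card + (b * (p + σ)).support.card := by
  push_neg at h
  have h1 : p ≠ 0 := h.1
  have h2 : p + σ ≠ 0 := by
    intro hc
    exact h.2 (by linear_combination hc - σ * two_zero)
  have := Age2 h1
  have := Bge2 h2
  omega

lemma one_bad (σ p q r s : R) (hsum : p + q + r + s = σ)
    (hq : q = 0 ∨ q = σ) (hr : r = 0 ∨ r = σ) (hs : s = 0 ∨ s = σ) :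
    p = 0 ∨ p = σ := by
  rcases hq with hq | hq <;> rcases hr with hr | hr <;> rcases hs with hs | hs <;>
    first
      | (left; first
          | linear_combination hsum - hq - hr - hs
          | linear_combination hsum - hq - hr - hs - σ * two_zero)
      | (right; first
          | linear_combination hsum - hq - hr - hs
          | linear_combination hsum - hq - hr - hs - σ * two_zero)

lemma core0 (σ p q r s : R) (hσ : σ ≠ 0) (hsum : p + q + r + s = σ)
    (hp : p = 0 ∨ p = σ) (hq : q = 0 ∨ q = σ) (hr : r = 0 ∨ r = σ) (hs : s = 0 ∨ s = σ) :
    9 ≤ (a * p).support.card + (a * q).support.card + (a * r).support.card +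
      (a * s).support.card + (b * (p + σ)).support.card + (b * (q + σ)).support.card +
      (b * (r + σ)).support.card + (b * (s + σ)).support.card := by
  have hss : σ + σ = 0 := by linear_combination σ * two_zero
  have h5 := AB5 (p := σ) hσ
  have hA := Age2 (p := σ) hσ
  have hB := Bge2 (p := σ) hσ
  rcases hp with hp | hp <;> rcases hq with hq | hq <;> rcases hr with hr | hr <;>
      rcases hs with hs | hs <;>
    rw [hp, hq, hr, hs] <;>
    first
      | exact absurd (show σ = 0 by
          linear_combination hsum - hp - hq - hr - hs) hσ
      | exact absurd (show σ = 0 by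
          linear_combination hsum - hp - hq - hr - hs - σ * two_zero) hσ
      | exact absurd (show σ = 0 by
          linear_combination hsum - hp - hq - hr - hs + σ * two_zero) hσ
      | (simp only [hss, zero_add, add_zero, mul_zero, support_zero, Finset.card_empty]
         omega)

lemma main_core (σ p q r s : R) (hσ : σ ≠ 0) (hsum : p + q + r + s = σ) :
    9 ≤ (a * p).support.card + (a * q).support.card + (a * r).support.card +
      (a * s).support.card + (b * (p + σ)).support.card + (b * (q + σ)).support.card +
      (b * (r + σ)).support.card + (b * (s + σ)).support.card := by
  by_cases cp : p = 0 ∨ p = σ <;> by_cases cq : q = 0 ∨ q = σ <;>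
    by_cases cr : r = 0 ∨ r = σ <;> by_cases cs : s = 0 ∨ s = σ <;>
  all_goals (
    have k1 := Kge2 σ p hσ
    have k2 := Kge2 σ q hσ
    have k3 := Kge2 σ r hσ
    have k4 := Kge2 σ s hσ
    first
      | exact core0 σ p q r s hσ hsum cp cq cr cs
      | exact absurd (one_bad σ p q r s hsum cq cr cs) cp
      | exact absurd (one_bad σ q p r s (by linear_combination hsum) cp cr cs) cq
      | exact absurd (one_bad σ r p q s (by linear_combination hsum) cp cq cs) cr
      | exact absurd (one_bad σ s p q r (by linear_combination hsum) cp cq cr) cs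
      | (try have b1 := badK σ p cp
         try have b2 := badK σ q cq
         try have b3 := badK σ r cr
         try have b4 := badK σ s cs
         omega))

lemma core_zero (p q r s : R) (hsum : p + q + r + s = 0)
    (hne : ¬(p = 0 ∧ q = 0 ∧ r = 0 ∧ s = 0)) :
    9 ≤ (a * p).support.card + (a * q).support.card + (a * r).support.card +
      (a * s).support.card + (b * p).support.card + (b * q).support.card +
      (b * r).support.card + (b * s).support.card := by
  rcases eq_or_ne p 0 with rfl | hp <;> rcases eq_or_ne q 0 with rfl | hq <;>
    rcases eq_or_ne r 0 with rfl | hr <;> rcases eq_or_ne s 0 with rfl | hs <;>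
    first
      | (exfalso; apply hne; exact ⟨rfl, rfl, rfl, rfl⟩)
      | exact absurd (show p = 0 by linear_combination hsum) hp
      | exact absurd (show q = 0 by linear_combination hsum) hq
      | exact absurd (show r = 0 by linear_combination hsum) hr
      | exact absurd (show s = 0 by linear_combination hsum) hs
      | (try have b1 := AB5 hp
         try have b2 := AB5 hq
         try have b3 := AB5 hr
         try have b4 := AB5 hs
         omega)

lemma core (p q r s : R) (hne : ¬(p = 0 ∧ q = 0 ∧ r = 0 ∧ s = 0)) :
    9 ≤ (a * p).support.card + (a * q).support.card + (a * r).support.card +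
      (a * s).support.card + (b * (q + r + s)).support.card +
      (b * (p + r + s)).support.card + (b * (p + q + s)).support.card +
      (b * (p + q + r)).support.card := by
  obtain ⟨t, ht⟩ : ∃ t, p + q + r + s = t := ⟨_, rfl⟩
  by_cases hσ : t = 0
  · subst hσ
    have e1 : q + r + s = p := by linear_combination ht - p * two_zero
    have e2 : p + r + s = q := by linear_combination ht - q * two_zero
    have e3 : p + q + s = r := by linear_combination ht - r * two_zero
    have e4 : p + q + r = s := by linear_combination ht - s * two_zero
    rw [e1, e2, e3, e4]
    exact core_zero p q r s ht hne
  · have e1 : q + r + s = p + t := by linear_combination ht - p * two_zero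
    have e2 : p + r + s = q + t := by linear_combination ht - q * two_zero
    have e3 : p + q + s = r + t := by linear_combination ht - r * two_zero
    have e4 : p + q + r = s + t := by linear_combination ht - s * two_zero
    rw [e1, e2, e3, e4]
    exact main_core t p q r s hσ ht

lemma expand (u : Fin 4 → R) :
    ∑ j, (Matrix.vecMul u
        ((!![1,0,0,0,0,1,1,1; 0,1,0,0,1,0,1,1; 0,0,1,0,1,1,0,1; 0,0,0,1,1,1,1,0] :
            Matrix (Fin 4) (Fin 8) (ZMod 2)).map C
          + ((X : Polynomial (ZMod 2)) ^ 1) •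
            (!![1,0,0,0,0,0,0,0; 0,1,0,0,0,0,0,0; 0,0,1,0,0,0,0,0; 0,0,0,1,0,0,0,0] :
              Matrix (Fin 4) (Fin 8) (ZMod 2)).map C
          + ((X : Polynomial (ZMod 2)) ^ 2) •
            (!![1,0,0,0,0,1,1,1; 0,1,0,0,1,0,1,1; 0,0,1,0,1,1,0,1; 0,0,0,1,1,1,1,0] :
              Matrix (Fin 4) (Fin 8) (ZMod 2)).map C) j).support.card =
      (a * u 0).support.card + (a * u 1).support.card + (a * u 2).support.card +
      (a * u 3).support.card + (b * (u 1 + u 2 + u 3)).support.card +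
      (b * (u 0 + u 2 + u 3)).support.card + (b * (u 0 + u 1 + u 3)).support.card +
      (b * (u 0 + u 1 + u 2)).support.card := by
  have hr00 : (![1,0,0,0,0,1,1,1] : Fin 8 → ZMod 2) 0 = 1 := rfl
  have hr01 : (![1,0,0,0,0,1,1,1] : Fin 8 → ZMod 2) 1 = 0 := rfl
  have hr02 : (![1,0,0,0,0,1,1,1] : Fin 8 → ZMod 2) 2 = 0 := rfl
  have hr03 : (![1,0,0,0,0,1,1,1] : Fin 8 → ZMod 2) 3 = 0 := rfl
  have hr04 : (![1,0,0,0,0,1,1,1] : Fin 8 → ZMod 2) 4 = 0 := rfl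
  have hr05 : (![1,0,0,0,0,1,1,1] : Fin 8 → ZMod 2) 5 = 1 := rfl
  have hr06 : (![1,0,0,0,0,1,1,1] : Fin 8 → ZMod 2) 6 = 1 := rfl
  have hr07 : (![1,0,0,0,0,1,1,1] : Fin 8 → ZMod 2) 7 = 1 := rfl
  have hr10 : (![0,1,0,0,1,0,1,1] : Fin 8 → ZMod 2) 0 = 0 := rfl
  have hr11 : (![0,1,0,0,1,0,1,1] : Fin 8 → ZMod 2) 1 = 1 := rfl
  have hr12 : (![0,1,0,0,1,0,1,1] : Fin 8 → ZMod 2) 2 = 0 := rfl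
  have hr13 : (![0,1,0,0,1,0,1,1] : Fin 8 → ZMod 2) 3 = 0 := rfl
  have hr14 : (![0,1,0,0,1,0,1,1] : Fin 8 → ZMod 2) 4 = 1 := rfl
  have hr15 : (![0,1,0,0,1,0,1,1] : Fin 8 → ZMod 2) 5 = 0 := rfl
  have hr16 : (![0,1,0,0,1,0,1,1] : Fin 8 → ZMod 2) 6 = 1 := rfl
  have hr17 : (![0,1,0,0,1,0,1,1] : Fin 8 → ZMod 2) 7 = 1 := rfl
  have hr20 : (![0,0,1,0,1,1,0,1] : Fin 8 → ZMod 2) 0 = 0 := rfl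
  have hr21 : (![0,0,1,0,1,1,0,1] : Fin 8 → ZMod 2) 1 = 0 := rfl
  have hr22 : (![0,0,1,0,1,1,0,1] : Fin 8 → ZMod 2) 2 = 1 := rfl
  have hr23 : (![0,0,1,0,1,1,0,1] : Fin 8 → ZMod 2) 3 = 0 := rfl
  have hr24 : (![0,0,1,0,1,1,0,1] : Fin 8 → ZMod 2) 4 = 1 := rfl
  have hr25 : (![0,0,1,0,1,1,0,1] : Fin 8 → ZMod 2) 5 = 1 := rfl
  have hr26 : (![0,0,1,0,1,1,0,1] : Fin 8 → ZMod 2) 6 = 0 := rfl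
  have hr27 : (![0,0,1,0,1,1,0,1] : Fin 8 → ZMod 2) 7 = 1 := rfl
  have hr30 : (![0,0,0,1,1,1,1,0] : Fin 8 → ZMod 2) 0 = 0 := rfl
  have hr31 : (![0,0,0,1,1,1,1,0] : Fin 8 → ZMod 2) 1 = 0 := rfl
  have hr32 : (![0,0,0,1,1,1,1,0] : Fin 8 → ZMod 2) 2 = 0 := rfl
  have hr33 : (![0,0,0,1,1,1,1,0] : Fin 8 → ZMod 2) 3 = 1 := rfl
  have hr34 : (![0,0,0,1,1,1,1,0] : Fin 8 → ZMod 2) 4 = 1 := rfl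
  have hr35 : (![0,0,0,1,1,1,1,0] : Fin 8 → ZMod 2) 5 = 1 := rfl
  have hr36 : (![0,0,0,1,1,1,1,0] : Fin 8 → ZMod 2) 6 = 1 := rfl
  have hr37 : (![0,0,0,1,1,1,1,0] : Fin 8 → ZMod 2) 7 = 0 := rfl
  have hs00 : (![1,0,0,0,0,0,0,0] : Fin 8 → ZMod 2) 0 = 1 := rfl
  have hs01 : (![1,0,0,0,0,0,0,0] : Fin 8 → ZMod 2) 1 = 0 := rfl
  have hs02 : (![1,0,0,0,0,0,0,0] : Fin 8 → ZMod 2) 2 = 0 := rfl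
  have hs03 : (![1,0,0,0,0,0,0,0] : Fin 8 → ZMod 2) 3 = 0 := rfl
  have hs04 : (![1,0,0,0,0,0,0,0] : Fin 8 → ZMod 2) 4 = 0 := rfl
  have hs05 : (![1,0,0,0,0,0,0,0] : Fin 8 → ZMod 2) 5 = 0 := rfl
  have hs06 : (![1,0,0,0,0,0,0,0] : Fin 8 → ZMod 2) 6 = 0 := rfl
  have hs07 : (![1,0,0,0,0,0,0,0] : Fin 8 → ZMod 2) 7 = 0 := rfl
  have hs10 : (![0,1,0,0,0,0,0,0] : Fin 8 → ZMod 2) 0 = 0 := rfl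
  have hs11 : (![0,1,0,0,0,0,0,0] : Fin 8 → ZMod 2) 1 = 1 := rfl
  have hs12 : (![0,1,0,0,0,0,0,0] : Fin 8 → ZMod 2) 2 = 0 := rfl
  have hs13 : (![0,1,0,0,0,0,0,0] : Fin 8 → ZMod 2) 3 = 0 := rfl
  have hs14 : (![0,1,0,0,0,0,0,0] : Fin 8 → ZMod 2) 4 = 0 := rfl
  have hs15 : (![0,1,0,0,0,0,0,0] : Fin 8 → ZMod 2) 5 = 0 := rfl
  have hs16 : (![0,1,0,0,0,0,0,0] : Fin 8 → ZMod 2) 6 = 0 := rfl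
  have hs17 : (![0,1,0,0,0,0,0,0] : Fin 8 → ZMod 2) 7 = 0 := rfl
  have hs20 : (![0,0,1,0,0,0,0,0] : Fin 8 → ZMod 2) 0 = 0 := rfl
  have hs21 : (![0,0,1,0,0,0,0,0] : Fin 8 → ZMod 2) 1 = 0 := rfl
  have hs22 : (![0,0,1,0,0,0,0,0] : Fin 8 → ZMod 2) 2 = 1 := rfl
  have hs23 : (![0,0,1,0,0,0,0,0] : Fin 8 → ZMod 2) 3 = 0 := rfl
  have hs24 : (![0,0,1,0,0,0,0,0] : Fin 8 → ZMod 2) 4 = 0 := rfl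
  have hs25 : (![0,0,1,0,0,0,0,0] : Fin 8 → ZMod 2) 5 = 0 := rfl
  have hs26 : (![0,0,1,0,0,0,0,0] : Fin 8 → ZMod 2) 6 = 0 := rfl
  have hs27 : (![0,0,1,0,0,0,0,0] : Fin 8 → ZMod 2) 7 = 0 := rfl
  have hs30 : (![0,0,0,1,0,0,0,0] : Fin 8 → ZMod 2) 0 = 0 := rfl
  have hs31 : (![0,0,0,1,0,0,0,0] : Fin 8 → ZMod 2) 1 = 0 := rfl
  have hs32 : (![0,0,0,1,0,0,0,0] : Fin 8 → ZMod 2) 2 = 0 := rfl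
  have hs33 : (![0,0,0,1,0,0,0,0] : Fin 8 → ZMod 2) 3 = 1 := rfl
  have hs34 : (![0,0,0,1,0,0,0,0] : Fin 8 → ZMod 2) 4 = 0 := rfl
  have hs35 : (![0,0,0,1,0,0,0,0] : Fin 8 → ZMod 2) 5 = 0 := rfl
  have hs36 : (![0,0,0,1,0,0,0,0] : Fin 8 → ZMod 2) 6 = 0 := rfl
  have hs37 : (![0,0,0,1,0,0,0,0] : Fin 8 → ZMod 2) 7 = 0 := rfl
  rw [Fin.sum_univ_eight]
  congr 1
  congr 1
  congr 1
  congr 1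
  congr 1
  congr 1
  congr 1
  all_goals congr 1
  all_goals (
    simp [Matrix.vecMul, dotProduct, Fin.sum_univ_four, a, b,
      Matrix.add_apply, Matrix.smul_apply, Matrix.map_apply, smul_eq_mul,
      Matrix.vecHead, Matrix.vecTail, Function.comp, hr00, hr01, hr02, hr03, hr04, hr05, hr06, hr07, hr10, hr11, hr12, hr13, hr14, hr15, hr16, hr17, hr20, hr21, hr22, hr23, hr24, hr25, hr26, hr27, hr30, hr31, hr32, hr33, hr34, hr35, hr36, hr37, hs00, hs01, hs02, hs03, hs04, hs05, hs06, hs07, hs10, hs11, hs12, hs13, hs14, hs15, hs16, hs17, hs20, hs21, hs22, hs23, hs24, hs25, hs26, hs27, hs30, hs31, hs32, hs33, hs34, hs35, hs36, hs37]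
    ring_nf)

end S14

/-- Over `GF(2)`, let `(I|B)` and `(I|0)` be the `4 × 8` block matrices built
from the `4 × 4` identity matrix `I`, the matrix `B` with rows
`(0,1,1,1), (1,0,1,1), (1,1,0,1), (1,1,1,0)`, and the `4 × 4` zero matrix.
The free distance of the `(8,4)` convolutional code with generator matrix
`G(X) = (I|B) + (I|0) X + (I|B) X²` equals `9`: the minimum of `wt(u·G(X))`
over all nonzero `u ∈ (GF(2)[X])⁴` is exactly `9`. -/
theorem stmt_14 :
    IsLeast {d : ℕ | ∃ u : Fin 4 → Polynomial (ZMod 2), u ≠ 0 ∧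
      d = ∑ j, (Matrix.vecMul u
        ((!![1,0,0,0,0,1,1,1; 0,1,0,0,1,0,1,1; 0,0,1,0,1,1,0,1; 0,0,0,1,1,1,1,0] :
            Matrix (Fin 4) (Fin 8) (ZMod 2)).map C
          + ((X : Polynomial (ZMod 2)) ^ 1) •
            (!![1,0,0,0,0,0,0,0; 0,1,0,0,0,0,0,0; 0,0,1,0,0,0,0,0; 0,0,0,1,0,0,0,0] :
              Matrix (Fin 4) (Fin 8) (ZMod 2)).map C
          + ((X : Polynomial (ZMod 2)) ^ 2) •
            (!![1,0,0,0,0,1,1,1; 0,1,0,0,1,0,1,1; 0,0,1,0,1,1,0,1; 0,0,0,1,1,1,1,0] :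
              Matrix (Fin 4) (Fin 8) (ZMod 2)).map C) j).support.card}
      9 := by
  constructor
  · refine ⟨![1, 0, 0, 0], ?_, ?_⟩
    · intro h
      have h0 := congrFun h 0
      simp at h0
    · rw [S14.expand]
      have e0 : (![1, 0, 0, 0] : Fin 4 → Polynomial (ZMod 2)) 0 = 1 := rfl
      have e1 : (![1, 0, 0, 0] : Fin 4 → Polynomial (ZMod 2)) 1 = 0 := rfl
      have e2 : (![1, 0, 0, 0] : Fin 4 → Polynomial (ZMod 2)) 2 = 0 := rfl
      have e3 : (![1, 0, 0, 0] : Fin 4 → Polynomial (ZMod 2)) 3 = 0 := rfl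
      rw [e0, e1, e2, e3]
      simp only [mul_one, mul_zero, support_zero, Finset.card_empty, add_zero, zero_add,
        S14.a_card, S14.b_card]
  · rintro d ⟨u, hu, rfl⟩
    rw [S14.expand]
    apply S14.core
    rintro ⟨h0, h1, h2, h3⟩
    apply hu
    funext i
    fin_cases i <;> assumption
end

section
/- Over GF(2) = ℤ/2ℤ, let g₁ = 1 + X + X² and g₂ = 1 + X² in GF(2)[X], and consider the (6,1) convolutional code whose generator matrix is the row vector (g₁, g₂, g₁, g₂, g₁, g₂), i.e. G(X) = (1,1,1,1,1,1) + (1,0,1,0,1,0)·X + (1,1,1,1,1,1)·X². Then its free distance equals 15; that is, the minimum of 3·wt(u·g₁) + 3·wt(u·g₂) over all nonzero polynomials u ∈ GF(2)[X] is exactly 15. -/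
open Polynomial

private lemma zmod2_poly_eq_of_support_eq {p q : Polynomial (ZMod 2)}
    (h : p.support = q.support) : p = q := by
  ext n
  have h2 : ∀ x : ZMod 2, x = 0 ∨ x = 1 := by decide
  by_cases hn : n ∈ p.support
  · have hq : n ∈ q.support := h ▸ hn
    rw [mem_support_iff] at hn hq
    rcases h2 (p.coeff n) with h' | h' <;> rcases h2 (q.coeff n) with h'' | h'' <;>
      simp_all
  · have hq : n ∉ q.support := h ▸ hn
    rw [notMem_support_iff] at hn hq
    rw [hn, hq]

private lemma key_lb (u : Polynomial (ZMod 2)) (hu : u ≠ 0) :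
    5 ≤ (u * (1 + X + X ^ 2)).support.card + (u * (1 + X ^ 2)).support.card := by
  set g₁ : Polynomial (ZMod 2) := 1 + X + X ^ 2 with hg₁
  set g₂ : Polynomial (ZMod 2) := 1 + X ^ 2 with hg₂
  have hg₁d : g₁.natDegree = 2 := by rw [hg₁]; compute_degree!
  have hg₂d : g₂.natDegree = 2 := by rw [hg₂]; compute_degree!
  have hg₁0 : g₁ ≠ 0 := fun h => by simpa [h] using hg₁d
  have hg₂0 : g₂ ≠ 0 := fun h => by simpa [h] using hg₂d
  have hg₁t : g₁.natTrailingDegree = 0 := by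
    apply Polynomial.natTrailingDegree_eq_zero_of_constantCoeff_ne_zero
    simp [hg₁, Polynomial.constantCoeff_apply, Polynomial.coeff_one, Polynomial.coeff_X_pow]
  have hg₂t : g₂.natTrailingDegree = 0 := by
    apply Polynomial.natTrailingDegree_eq_zero_of_constantCoeff_ne_zero
    simp [hg₂, Polynomial.constantCoeff_apply, Polynomial.coeff_one, Polynomial.coeff_X_pow]
  set p := u * g₁ with hp
  set q := u * g₂ with hq
  have hp0 : p ≠ 0 := mul_ne_zero hu hg₁0
  have hq0 : q ≠ 0 := mul_ne_zero hu hg₂0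
  have hpd : p.natDegree = u.natDegree + 2 := by
    rw [hp, Polynomial.natDegree_mul hu hg₁0, hg₁d]
  have hqd : q.natDegree = u.natDegree + 2 := by
    rw [hq, Polynomial.natDegree_mul hu hg₂0, hg₂d]
  have hpt : p.natTrailingDegree = u.natTrailingDegree := by
    rw [hp, Polynomial.natTrailingDegree_mul hu hg₁0, hg₁t, add_zero]
  have hqt : q.natTrailingDegree = u.natTrailingDegree := by
    rw [hq, Polynomial.natTrailingDegree_mul hu hg₂0, hg₂t, add_zero]
  have hut : u.natTrailingDegree ≤ u.natDegree := Polynomial.natTrailingDegree_le_natDegree u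
  have hplt : p.natTrailingDegree < p.natDegree := by omega
  have hqlt : q.natTrailingDegree < q.natDegree := by omega
  -- each support has card ≥ 2
  have hpmem1 : p.natDegree ∈ p.support := Polynomial.natDegree_mem_support_of_nonzero hp0
  have hpmem2 : p.natTrailingDegree ∈ p.support :=
    Polynomial.natTrailingDegree_mem_support_of_nonzero hp0
  have hqmem1 : q.natDegree ∈ q.support := Polynomial.natDegree_mem_support_of_nonzero hq0
  have hqmem2 : q.natTrailingDegree ∈ q.support :=
    Polynomial.natTrailingDegree_mem_support_of_nonzero hq0
  have hpcard : 2 ≤ p.support.card := by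
    have : ({p.natTrailingDegree, p.natDegree} : Finset ℕ) ⊆ p.support := by
      intro x hx
      simp only [Finset.mem_insert, Finset.mem_singleton] at hx
      rcases hx with rfl | rfl <;> assumption
    calc 2 = ({p.natTrailingDegree, p.natDegree} : Finset ℕ).card := by
            rw [Finset.card_insert_of_notMem (by simp [Nat.ne_of_lt hplt]),
              Finset.card_singleton]
      _ ≤ p.support.card := Finset.card_le_card this
  have hqcard : 2 ≤ q.support.card := by
    have : ({q.natTrailingDegree, q.natDegree} : Finset ℕ) ⊆ q.support := by
      intro x hx
      simp only [Finset.mem_insert, Finset.mem_singleton] at hx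
      rcases hx with rfl | rfl <;> assumption
    calc 2 = ({q.natTrailingDegree, q.natDegree} : Finset ℕ).card := by
            rw [Finset.card_insert_of_notMem (by simp [Nat.ne_of_lt hqlt]),
              Finset.card_singleton]
      _ ≤ q.support.card := Finset.card_le_card this
  -- it cannot be that both have card exactly 2
  by_contra hlt
  push_neg at hlt
  have hpc2 : p.support.card = 2 := by omega
  have hqc2 : q.support.card = 2 := by omega
  have hpsupp : p.support = {p.natTrailingDegree, p.natDegree} := by
    symm
    apply Finset.eq_of_subset_of_card_le
    · intro x hx
      simp only [Finset.mem_insert, Finset.mem_singleton] at hx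
      rcases hx with rfl | rfl <;> assumption
    · rw [hpc2, Finset.card_insert_of_notMem (by simp [Nat.ne_of_lt hplt]),
        Finset.card_singleton]
  have hqsupp : q.support = {q.natTrailingDegree, q.natDegree} := by
    symm
    apply Finset.eq_of_subset_of_card_le
    · intro x hx
      simp only [Finset.mem_insert, Finset.mem_singleton] at hx
      rcases hx with rfl | rfl <;> assumption
    · rw [hqc2, Finset.card_insert_of_notMem (by simp [Nat.ne_of_lt hqlt]),
        Finset.card_singleton]
  have hsupp : p.support = q.support := by rw [hpsupp, hqsupp, hpt, hqt, hpd, hqd]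
  have hpq : p = q := zmod2_poly_eq_of_support_eq hsupp
  have hX : u * X = 0 := by
    have : u * g₁ - u * g₂ = u * (g₁ - g₂) := by ring
    have hgd : g₁ - g₂ = X := by rw [hg₁, hg₂]; ring
    rw [hgd] at this
    rw [← this, ← hp, ← hq, hpq, sub_self]
  exact hu (by simpa [Polynomial.X_ne_zero] using mul_eq_zero.mp hX)

/-- Over `GF(2)`, let `g₁ = 1 + X + X²` and `g₂ = 1 + X²`.  The free distance of
the `(6,1)` convolutional code with generator row vector `(g₁,g₂,g₁,g₂,g₁,g₂)`
equals `15`: the minimum of `3·wt(u·g₁) + 3·wt(u·g₂)` over all nonzero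
`u ∈ GF(2)[X]` is exactly `15`. -/
theorem stmt_15 :
    IsLeast {d : ℕ | ∃ u : Polynomial (ZMod 2), u ≠ 0 ∧
      d = 3 * (u * (1 + X + X ^ 2)).support.card
        + 3 * (u * (1 + X ^ 2)).support.card}
      15 := by
  constructor
  · refine ⟨1, one_ne_zero, ?_⟩
    have h1 : ((1 : Polynomial (ZMod 2)) * (1 + X + X ^ 2)).support = {0, 1, 2} := by
      rw [one_mul]
      ext n
      simp only [mem_support_iff, Polynomial.coeff_add, Polynomial.coeff_one,
        Polynomial.coeff_X, Polynomial.coeff_X_pow, Finset.mem_insert, Finset.mem_singleton]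
      rcases n with _ | _ | _ | n <;> simp <;> decide
    have h2 : ((1 : Polynomial (ZMod 2)) * (1 + X ^ 2)).support = {0, 2} := by
      rw [one_mul]
      ext n
      simp only [mem_support_iff, Polynomial.coeff_add, Polynomial.coeff_one,
        Polynomial.coeff_X_pow, Finset.mem_insert, Finset.mem_singleton]
      rcases n with _ | _ | _ | n <;> simp <;> decide
    rw [h1, h2]
    decide
  · rintro d ⟨u, hu, rfl⟩
    have := key_lb u hu
    omega
end

section
/- Over GF(2) = ℤ/2ℤ, let g₁ = 1 + X + X³ + X⁴ and g₂ = 1 + X³ + X⁴ in GF(2)[X], and consider the (6,1) convolutional code whose generator matrix is the row vector (g₁, g₂, g₁, g₂, g₁, g₂), i.e. G(X) = (1,1,1,1,1,1) + (1,0,1,0,1,0)·X + (1,1,1,1,1,1)·X³ + (1,1,1,1,1,1)·X⁴. Then its free distance equals 21; that is, the minimum of 3·wt(u·g₁) + 3·wt(u·g₂) over all nonzero polynomials u ∈ GF(2)[X] is exactly 21. -/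
open Polynomial

open Polynomial
abbrev R2 := Polynomial (ZMod 2)

lemma two_eq_zero : (2 : R2) = 0 := by
  exact_mod_cast CharP.cast_eq_zero R2 2

lemma zmod2_eq_one : ∀ x : ZMod 2, x ≠ 0 → x = 1 := by decide

noncomputable def G1 : R2 := 1 + X + X ^ 3 + X ^ 4
noncomputable def G2 : R2 := 1 + X ^ 3 + X ^ 4

lemma copXG1 : IsCoprime (X : R2) G1 :=
  ⟨1 + X ^ 2 + X ^ 3, 1, by unfold G1; linear_combination (X + X^3 + X^4 : R2) * two_eq_zero⟩

lemma copXG2 : IsCoprime (X : R2) G2 :=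
  ⟨X ^ 2 + X ^ 3, 1, by unfold G2; linear_combination (X^3 + X^4 : R2) * two_eq_zero⟩

lemma I1 : (X + 1 : R2) * (X ^ 3 + 1) = G1 := by unfold G1; ring

lemma I4 : G1 * (1 + X + X ^ 2) = 1 + X ^ 6 := by
  unfold G1; linear_combination (X + X^2 + X^3 + X^4 + X^5 : R2) * two_eq_zero

noncomputable def Hp : R2 := 1 + X^3 + X^4 + X^6 + X^8 + X^9 + X^10 + X^11

lemma I5 : G2 * Hp = 1 + X ^ 15 := by
  unfold G2 Hp
  linear_combination (X^3+X^4+X^6+X^7+X^8+X^9+X^10+X^11+X^12+X^13+X^14 : R2) * two_eq_zero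

noncomputable def Qp : R2 := 1 + X + X^2 + X^3 + X^6
noncomputable def Pp : R2 := 1 + X + X^4 + X^5 + X^7 + X^9 + X^10 + X^11 + X^12 + X^15

lemma I7 : G2 * (1 + X + X ^ 2) = Qp := by
  unfold G2 Qp; linear_combination (X^4 + X^5 : R2) * two_eq_zero

lemma I8 : Hp * G1 = Pp := by
  unfold Hp G1 Pp
  linear_combination (X^3+X^4+X^6+X^7+X^8+X^9+X^10+X^11+X^12+X^13+X^14 : R2) * two_eq_zero

lemma geom6 (k : ℕ) : (1 + X ^ 6 : R2) * ∑ i ∈ Finset.range k, (X ^ 6) ^ i = 1 + (X ^ 6) ^ k := by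
  have hg := geom_sum_mul (X ^ 6 : R2) k
  linear_combination hg + ((∑ i ∈ Finset.range k, (X ^ 6 : R2) ^ i) - 1) * two_eq_zero

lemma geom15 (k : ℕ) : (1 + X ^ 15 : R2) * ∑ i ∈ Finset.range k, (X ^ 15) ^ i = 1 + (X ^ 15) ^ k := by
  have hg := geom_sum_mul (X ^ 15 : R2) k
  linear_combination hg + ((∑ i ∈ Finset.range k, (X ^ 15 : R2) ^ i) - 1) * two_eq_zero

lemma G1_ne : (G1 : R2) ≠ 0 := by
  intro h
  have := congrArg (fun p => Polynomial.coeff p 0) h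
  simp [G1, coeff_one, coeff_X, coeff_X_pow] at this

lemma G2_ne : (G2 : R2) ≠ 0 := by
  intro h
  have := congrArg (fun p => Polynomial.coeff p 0) h
  simp [G2, coeff_one, coeff_X, coeff_X_pow] at this

def M1 : Matrix (Fin 4) (Fin 4) (ZMod 2) := !![0,0,0,1; 1,0,0,1; 0,1,0,0; 0,0,1,1]
def M2 : Matrix (Fin 4) (Fin 4) (ZMod 2) := !![0,0,0,1; 1,0,0,0; 0,1,0,0; 0,0,1,1]

lemma pow_eq_one_of_dvd {g : R2} {M : Matrix (Fin 4) (Fin 4) (ZMod 2)}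
    (hgM : aeval (R := ZMod 2) M g = 0) {c : ℕ} (h : g ∣ 1 + X ^ c) : M ^ c = 1 := by
  obtain ⟨t, ht⟩ := h
  have h0 : aeval (R := ZMod 2) M (1 + X ^ c) = 0 := by rw [ht, map_mul, hgM, zero_mul]
  rw [map_add, map_one, map_pow, aeval_X] at h0
  have : M ^ c = -1 := eq_neg_of_add_eq_zero_right h0
  rw [this]
  decide

lemma aevalM1 : aeval (R := ZMod 2) M1 G1 = 0 := by
  have h : (1 : Matrix (Fin 4) (Fin 4) (ZMod 2)) + M1 + M1 ^ 3 + M1 ^ 4 = 0 := by decide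
  simpa [G1, map_add, map_pow] using h

lemma aevalM2 : aeval (R := ZMod 2) M2 G2 = 0 := by
  have h : (1 : Matrix (Fin 4) (Fin 4) (ZMod 2)) + M2 ^ 3 + M2 ^ 4 = 0 := by decide
  simpa [G2, map_add, map_pow] using h

lemma ordM1 : orderOf M1 = 6 := by
  have h6 : M1 ^ 6 = 1 := by decide
  have hd : orderOf M1 ∣ 6 := orderOf_dvd_of_pow_eq_one h6
  have hle : orderOf M1 ≤ 6 := Nat.le_of_dvd (by norm_num) hd
  have hpow : M1 ^ orderOf M1 = 1 := pow_orderOf_eq_one M1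
  have henum : ∀ d, d ≤ 6 → d ∣ 6 → d = 1 ∨ d = 2 ∨ d = 3 ∨ d = 6 := by decide
  rcases henum _ hle hd with h | h | h | h <;> rw [h] at hpow <;> first
    | exact absurd hpow (by decide)
    | exact h ▸ rfl

lemma ordM2 : orderOf M2 = 15 := by
  have h15 : M2 ^ 15 = 1 := by decide
  have hd : orderOf M2 ∣ 15 := orderOf_dvd_of_pow_eq_one h15
  have hle : orderOf M2 ≤ 15 := Nat.le_of_dvd (by norm_num) hd
  have hpow : M2 ^ orderOf M2 = 1 := pow_orderOf_eq_one M2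
  have henum : ∀ d, d ≤ 15 → d ∣ 15 → d = 1 ∨ d = 3 ∨ d = 5 ∨ d = 15 := by decide
  rcases henum _ hle hd with h | h | h | h <;> rw [h] at hpow <;> first
    | exact absurd hpow (by decide)
    | exact h ▸ rfl

lemma dvd6 {c : ℕ} (h : G1 ∣ 1 + X ^ c) : 6 ∣ c := by
  rw [← ordM1]; exact orderOf_dvd_of_pow_eq_one (pow_eq_one_of_dvd aevalM1 h)

lemma dvd15 {c : ℕ} (h : G2 ∣ 1 + X ^ c) : 15 ∣ c := by
  rw [← ordM2]; exact orderOf_dvd_of_pow_eq_one (pow_eq_one_of_dvd aevalM2 h)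

lemma coeffG1 (n : ℕ) : G1.coeff n = if n = 0 ∨ n = 1 ∨ n = 3 ∨ n = 4 then 1 else 0 := by
  simp only [G1, coeff_add, coeff_one, coeff_X, coeff_X_pow]
  by_cases h : n < 5
  · interval_cases n <;> decide
  · rw [if_neg (by omega)]
    simp [show ∀ m : ℕ, m < 5 → ¬ (n = m) by omega, show ¬ (1 = n) by omega]

lemma coeffG2 (n : ℕ) : G2.coeff n = if n = 0 ∨ n = 3 ∨ n = 4 then 1 else 0 := by
  simp only [G2, coeff_add, coeff_one, coeff_X, coeff_X_pow]
  by_cases h : n < 5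
  · interval_cases n <;> decide
  · rw [if_neg (by omega)]
    simp [show ∀ m : ℕ, m < 5 → ¬ (n = m) by omega, show ¬ (1 = n) by omega]

lemma coeffQp (n : ℕ) : Qp.coeff n = if n = 0 ∨ n = 1 ∨ n = 2 ∨ n = 3 ∨ n = 6 then 1 else 0 := by
  simp only [Qp, coeff_add, coeff_one, coeff_X, coeff_X_pow]
  by_cases h : n < 7
  · interval_cases n <;> decide
  · rw [if_neg (by omega)]
    simp [show ∀ m : ℕ, m < 7 → ¬ (n = m) by omega, show ¬ (1 = n) by omega]

lemma coeffPp (n : ℕ) : Pp.coeff n =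
    if n = 0 ∨ n = 1 ∨ n = 4 ∨ n = 5 ∨ n = 7 ∨ n = 9 ∨ n = 10 ∨ n = 11 ∨ n = 12 ∨ n = 15
    then 1 else 0 := by
  simp only [Pp, coeff_add, coeff_one, coeff_X, coeff_X_pow]
  by_cases h : n < 16
  · interval_cases n <;> decide
  · rw [if_neg (by omega)]
    simp [show ∀ m : ℕ, m < 16 → ¬ (n = m) by omega, show ¬ (1 = n) by omega]

lemma suppG1 : G1.support = {0, 1, 3, 4} := by
  ext n
  rw [mem_support_iff, coeffG1]
  split_ifs with h <;> simp_all

lemma suppG2 : G2.support = {0, 3, 4} := by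
  ext n
  rw [mem_support_iff, coeffG2]
  split_ifs with h <;> simp_all

lemma supp_card_one {p : R2} (h : p.support.card = 1) : ∃ a, p = X ^ a := by
  obtain ⟨a, ha⟩ := Finset.card_eq_one.mp h
  refine ⟨a, ?_⟩
  ext n
  rw [coeff_X_pow]
  rcases eq_or_ne n a with rfl | hn
  · rw [if_pos rfl]
    exact zmod2_eq_one _ (by rw [← mem_support_iff, ha]; exact Finset.mem_singleton_self _)
  · rw [if_neg hn]
    by_contra hc
    exact hn (by simpa [ha] using mem_support_iff.mpr hc)

lemma supp_card_two {p : R2} (h : p.support.card = 2) :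
    ∃ a c : ℕ, 0 < c ∧ p = X ^ a * (1 + X ^ c) := by
  obtain ⟨x, y, hxy, hs⟩ := Finset.card_eq_two.mp h
  obtain ⟨a, b, hab, hs⟩ : ∃ a b : ℕ, a < b ∧ p.support = {a, b} := by
    rcases hxy.lt_or_gt with hlt | hlt
    · exact ⟨x, y, hlt, hs⟩
    · exact ⟨y, x, hlt, by rw [hs, Finset.pair_comm]⟩
  have hp : p = X ^ a + X ^ b := by
    ext n
    rw [coeff_add, coeff_X_pow, coeff_X_pow]
    rcases eq_or_ne n a with rfl | hna
    · rw [if_pos rfl, if_neg hab.ne]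
      have : p.coeff n ≠ 0 := by rw [← mem_support_iff, hs]; simp
      rw [zmod2_eq_one _ this, add_zero]
    rcases eq_or_ne n b with rfl | hnb
    · rw [if_neg hna, if_pos rfl]
      have : p.coeff n ≠ 0 := by rw [← mem_support_iff, hs]; simp
      rw [zmod2_eq_one _ this, zero_add]
    · rw [if_neg hna, if_neg hnb, add_zero]
      by_contra hc
      have := mem_support_iff.mpr hc
      rw [hs, Finset.mem_insert, Finset.mem_singleton] at this
      tauto
  refine ⟨a, b - a, by omega, ?_⟩
  rw [hp, mul_add, mul_one, ← pow_add]
  congr 2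
  omega

lemma even_card {p : R2} (h : (X + 1 : R2) ∣ p) : Even p.support.card := by
  have heval : p.eval 1 = 0 := by
    obtain ⟨t, rfl⟩ := h
    rw [eval_mul]
    have h1 : ((X + 1 : R2)).eval 1 = 0 := by
      rw [eval_add, eval_X, eval_one]; decide
    rw [h1, zero_mul]
  have hcast : ((p.support.card : ℕ) : ZMod 2) = 0 := by
    calc ((p.support.card : ℕ) : ZMod 2)
        = ∑ _n ∈ p.support, (1 : ZMod 2) := by rw [Finset.sum_const, nsmul_eq_mul, mul_one]
      _ = ∑ n ∈ p.support, p.coeff n := by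
          refine Finset.sum_congr rfl fun n hn => ?_
          rw [zmod2_eq_one _ (mem_support_iff.mp hn)]
      _ = p.eval 1 := by rw [eval_eq_sum, Polynomial.sum_def]; simp
      _ = 0 := heval
  obtain ⟨m, hm⟩ := (ZMod.natCast_eq_zero_iff _ 2).mp hcast
  exact ⟨m, by omega⟩

lemma coeff_low (p : R2) (m k j : ℕ) (hm : 0 < m) (hk : 0 < k) (hj : j < m) :
    (p * ∑ i ∈ Finset.range k, (X ^ m) ^ i).coeff j = p.coeff j := by
  rw [Finset.mul_sum, finset_sum_coeff]
  rw [Finset.sum_eq_single_of_mem 0 (Finset.mem_range.mpr hk)]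
  · simp
  · intro i hi hne
    rw [← pow_mul, coeff_mul_X_pow', if_neg]
    have h1 : m * 1 ≤ m * i := Nat.mul_le_mul_left m (by omega)
    omega

lemma coeff_top6 (k : ℕ) (hk : 0 < k) :
    (Qp * ∑ i ∈ Finset.range k, (X ^ 6) ^ i).coeff (6 * k) = 1 := by
  rw [Finset.mul_sum, finset_sum_coeff]
  rw [Finset.sum_eq_single_of_mem (k - 1) (Finset.mem_range.mpr (by omega))]
  · rw [← pow_mul, coeff_mul_X_pow', if_pos (by omega),
      show 6 * k - 6 * (k - 1) = 6 by omega, coeffQp]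
    norm_num
  · intro i hi hne
    rw [Finset.mem_range] at hi
    rw [← pow_mul, coeff_mul_X_pow', if_pos (by omega), coeffQp, if_neg (by omega)]

lemma card_ge_two {u : R2} {g : R2} (hu : u ≠ 0) (hg : g ≠ 0)
    (hcop : IsCoprime (X : R2) g) (hdeg : ¬ IsUnit g) : 2 ≤ (u * g).support.card := by
  have hne : u * g ≠ 0 := mul_ne_zero hu hg
  have h0 : (u * g).support.card ≠ 0 := by
    simpa [Finset.card_eq_zero, Polynomial.support_eq_empty] using hne
  have h1 : (u * g).support.card ≠ 1 := by
    intro h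
    obtain ⟨a, ha⟩ := supp_card_one h
    have hdvd : g ∣ X ^ a := ⟨u, by rw [← ha]; ring⟩
    exact hdeg ((hcop.pow_left).isUnit_of_dvd' hdvd dvd_rfl)
  omega

lemma G1_not_unit : ¬ IsUnit G1 := by
  intro h
  have hdeg := Polynomial.isUnit_iff_degree_eq_zero.mp h
  have : G1.degree = 4 := by
    unfold G1
    compute_degree!
  rw [this] at hdeg
  exact absurd hdeg (by decide)

lemma G2_not_unit : ¬ IsUnit G2 := by
  intro h
  have hdeg := Polynomial.isUnit_iff_degree_eq_zero.mp h
  have : G2.degree = 4 := by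
    unfold G2
    compute_degree!
  rw [this] at hdeg
  exact absurd hdeg (by decide)

/-- If `u·G1` has weight 2 then `u·G2` has weight at least 5. -/
lemma L2 {u : R2} (hu : u ≠ 0) (h : (u * G1).support.card = 2) :
    5 ≤ (u * G2).support.card := by
  obtain ⟨a, c, hc, huG⟩ := supp_card_two h
  have hdvd : G1 ∣ 1 + X ^ c := by
    have h1 : G1 ∣ X ^ a * (1 + X ^ c) := ⟨u, by rw [← huG]; ring⟩
    exact (copXG1.symm.pow_right).dvd_of_dvd_mul_left h1
  obtain ⟨k, rfl⟩ := dvd6 hdvd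
  have hk : 0 < k := by omega
  set S : R2 := ∑ i ∈ Finset.range k, (X ^ 6) ^ i with hS
  have hgeom : (1 + X ^ 6 : R2) * S = 1 + X ^ (6 * k) := by
    rw [hS, geom6, pow_mul]
  have key : u = X ^ a * ((1 + X + X ^ 2) * S) := by
    have h2 : u * G1 = (X ^ a * ((1 + X + X ^ 2) * S)) * G1 := by
      rw [huG, ← hgeom, ← I4]
      ring
    exact mul_right_cancel₀ G1_ne h2
  have huG2 : u * G2 = X ^ a * (Qp * S) := by
    rw [key, ← I7]
    ring
  have hmem : ∀ j : ℕ, (Qp * S).coeff j = 1 → a + j ∈ (u * G2).support := by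
    intro j hj
    rw [mem_support_iff, huG2, add_comm a j, coeff_X_pow_mul, hj]
    exact one_ne_zero
  have hsub : ({a, a + 1, a + 2, a + 3, a + 6 * k} : Finset ℕ) ⊆ (u * G2).support := by
    intro n hn
    simp only [Finset.mem_insert, Finset.mem_singleton] at hn
    rcases hn with rfl | rfl | rfl | rfl | rfl
    · simpa using hmem 0 (by rw [coeff_low Qp 6 k 0 (by norm_num) hk (by norm_num), coeffQp]; norm_num)
    · exact hmem 1 (by rw [coeff_low Qp 6 k 1 (by norm_num) hk (by norm_num), coeffQp]; norm_num)
    · exact hmem 2 (by rw [coeff_low Qp 6 k 2 (by norm_num) hk (by norm_num), coeffQp]; norm_num)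
    · exact hmem 3 (by rw [coeff_low Qp 6 k 3 (by norm_num) hk (by norm_num), coeffQp]; norm_num)
    · exact hmem (6 * k) (coeff_top6 k hk)
  have hcard : ({a, a + 1, a + 2, a + 3, a + 6 * k} : Finset ℕ).card = 5 := by
    have h6 : 6 ≤ 6 * k := by omega
    rw [Finset.card_insert_of_notMem (by intro hmem; simp only [Finset.mem_insert, Finset.mem_singleton] at hmem; omega),
      Finset.card_insert_of_notMem (by intro hmem; simp only [Finset.mem_insert, Finset.mem_singleton] at hmem; omega),
      Finset.card_insert_of_notMem (by intro hmem; simp only [Finset.mem_insert, Finset.mem_singleton] at hmem; omega),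
      Finset.card_insert_of_notMem (by intro hmem; simp only [Finset.mem_insert, Finset.mem_singleton] at hmem; omega), Finset.card_singleton]
  calc 5 = ({a, a + 1, a + 2, a + 3, a + 6 * k} : Finset ℕ).card := hcard.symm
    _ ≤ (u * G2).support.card := Finset.card_le_card hsub

/-- If `u·G2` has weight 2 then `u·G1` has weight at least 6. -/
lemma L3 {u : R2} (hu : u ≠ 0) (h : (u * G2).support.card = 2) :
    6 ≤ (u * G1).support.card := by
  obtain ⟨a, c, hc, huG⟩ := supp_card_two h
  have hdvd : G2 ∣ 1 + X ^ c := by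
    have h1 : G2 ∣ X ^ a * (1 + X ^ c) := ⟨u, by rw [← huG]; ring⟩
    exact (copXG2.symm.pow_right).dvd_of_dvd_mul_left h1
  obtain ⟨k, rfl⟩ := dvd15 hdvd
  have hk : 0 < k := by omega
  set S : R2 := ∑ i ∈ Finset.range k, (X ^ 15) ^ i with hS
  have hgeom : (1 + X ^ 15 : R2) * S = 1 + X ^ (15 * k) := by
    rw [hS, geom15, pow_mul]
  have key : u = X ^ a * (Hp * S) := by
    have h2 : u * G2 = (X ^ a * (Hp * S)) * G2 := by
      rw [huG, ← hgeom, ← I5]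
      ring
    exact mul_right_cancel₀ G2_ne h2
  have huG1 : u * G1 = X ^ a * (Pp * S) := by
    rw [key, ← I8]
    ring
  have hmem : ∀ j : ℕ, (Pp * S).coeff j = 1 → a + j ∈ (u * G1).support := by
    intro j hj
    rw [mem_support_iff, huG1, add_comm a j, coeff_X_pow_mul, hj]
    exact one_ne_zero
  have hj : ∀ j : ℕ, j < 15 → Pp.coeff j = 1 → a + j ∈ (u * G1).support := by
    intro j hjlt hjc
    exact hmem j (by rw [coeff_low Pp 15 k j (by norm_num) hk hjlt, hjc])
  have hsub : ({a, a + 1, a + 4, a + 5, a + 7, a + 9} : Finset ℕ) ⊆ (u * G1).support := by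
    intro n hn
    simp only [Finset.mem_insert, Finset.mem_singleton] at hn
    rcases hn with rfl | rfl | rfl | rfl | rfl | rfl
    · simpa using hj 0 (by norm_num) (by rw [coeffPp]; norm_num)
    · exact hj 1 (by norm_num) (by rw [coeffPp]; norm_num)
    · exact hj 4 (by norm_num) (by rw [coeffPp]; norm_num)
    · exact hj 5 (by norm_num) (by rw [coeffPp]; norm_num)
    · exact hj 7 (by norm_num) (by rw [coeffPp]; norm_num)
    · exact hj 9 (by norm_num) (by rw [coeffPp]; norm_num)
  have hcard : ({a, a + 1, a + 4, a + 5, a + 7, a + 9} : Finset ℕ).card = 6 := by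
    rw [Finset.card_insert_of_notMem (by intro hmem; simp only [Finset.mem_insert, Finset.mem_singleton] at hmem; omega),
      Finset.card_insert_of_notMem (by intro hmem; simp only [Finset.mem_insert, Finset.mem_singleton] at hmem; omega),
      Finset.card_insert_of_notMem (by intro hmem; simp only [Finset.mem_insert, Finset.mem_singleton] at hmem; omega),
      Finset.card_insert_of_notMem (by intro hmem; simp only [Finset.mem_insert, Finset.mem_singleton] at hmem; omega),
      Finset.card_insert_of_notMem (by intro hmem; simp only [Finset.mem_insert, Finset.mem_singleton] at hmem; omega), Finset.card_singleton]
  calc 6 = ({a, a + 1, a + 4, a + 5, a + 7, a + 9} : Finset ℕ).card := hcard.symm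
    _ ≤ (u * G1).support.card := Finset.card_le_card hsub

lemma arith_final (n1 n2 : ℕ) (he : n1 % 2 = 0) (h1 : 2 ≤ n1) (h2 : 2 ≤ n2)
    (hl2 : n1 = 2 → 5 ≤ n2) (hl3 : n2 = 2 → 6 ≤ n1) : 21 ≤ 3 * n1 + 3 * n2 := by
  rcases eq_or_ne n1 2 with hx | hx
  · have := hl2 hx
    omega
  rcases eq_or_ne n2 2 with hy | hy
  · have := hl3 hy
    omega
  omega

/-- Over `GF(2)`, let `g₁ = 1 + X + X³ + X⁴` and `g₂ = 1 + X³ + X⁴`.  The free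
distance of the `(6,1)` convolutional code with generator row vector
`(g₁,g₂,g₁,g₂,g₁,g₂)` equals `21`: the minimum of `3·wt(u·g₁) + 3·wt(u·g₂)`
over all nonzero `u ∈ GF(2)[X]` is exactly `21`. -/
theorem stmt_16 :
    IsLeast {d : ℕ | ∃ u : Polynomial (ZMod 2), u ≠ 0 ∧
      d = 3 * (u * (1 + X + X ^ 3 + X ^ 4)).support.card
        + 3 * (u * (1 + X ^ 3 + X ^ 4)).support.card}
      21 := by
  have hG1 : (1 + X + X ^ 3 + X ^ 4 : R2) = G1 := rfl
  have hG2 : (1 + X ^ 3 + X ^ 4 : R2) = G2 := rfl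
  constructor
  · refine ⟨1, one_ne_zero, ?_⟩
    rw [one_mul, one_mul, hG1, hG2, suppG1, suppG2]
    rfl
  · rintro d ⟨u, hu, rfl⟩
    have heven : (u * G1).support.card % 2 = 0 := by
      obtain ⟨m, hm⟩ := even_card (Dvd.dvd.mul_left ⟨X ^ 3 + 1, I1.symm⟩ u)
      omega
    have h1 : 2 ≤ (u * G1).support.card := card_ge_two hu G1_ne copXG1 G1_not_unit
    have h2 : 2 ≤ (u * G2).support.card := card_ge_two hu G2_ne copXG2 G2_not_unit
    exact arith_final _ _ heven h1 h2 (fun h => L2 hu h) (fun h => L3 hu h)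
end

section
/- Over GF(2) = ℤ/2ℤ, let g₁ = 1 + X + X³ + X⁴ + X⁵ and g₂ = 1 + X³ + X⁴ + X⁵ in GF(2)[X]. Then the free distance of the (2,1) convolutional code with generator matrix G = (g₁, g₂) equals 8; that is, the minimum of wt(u·g₁) + wt(u·g₂) over all nonzero polynomials u ∈ GF(2)[X] is exactly 8. -/
open Polynomial Finset

namespace Stmt17Aux

abbrev St := ZMod 2 × ZMod 2 × ZMod 2 × ZMod 2 × ZMod 2

def Vtab : List ℕ :=
  [8,2,3,3,3,4,4,4,5,3,5,5,6,4,5,5,6,5,4,4,5,5,6,6,6,5,5,5,5,6,6,6]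

def V (s : St) : ℕ :=
  Vtab.getD (s.1.val*16 + s.2.1.val*8 + s.2.2.1.val*4 + s.2.2.2.1.val*2 + s.2.2.2.2.val) 0

def stepSt (s : St) (b : ZMod 2) : St := (s.2.1, s.2.2.1, s.2.2.2.1, s.2.2.2.2, b)

def wt2 (x : ZMod 2) : ℕ := if x ≠ 0 then 1 else 0

def cost (s : St) (b : ZMod 2) : ℕ :=
  wt2 (b + s.2.2.2.2 + s.2.2.1 + s.2.1 + s.1) + wt2 (b + s.2.2.1 + s.2.1 + s.1)

lemma trans_ineq : ∀ (s : St) (b : ZMod 2), V (stepSt s b) ≤ V s + cost s b := by decide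

variable (u : Polynomial (ZMod 2))

def φ (k n : ℕ) : ZMod 2 := if k ≤ n then u.coeff (n - k) else 0

def S (n : ℕ) : St := (φ u 4 n, φ u 3 n, φ u 2 n, φ u 1 n, φ u 0 n)

def c1 (n : ℕ) : ZMod 2 := φ u 0 n + φ u 1 n + φ u 3 n + φ u 4 n + φ u 5 n
def c2 (n : ℕ) : ZMod 2 := φ u 0 n + φ u 3 n + φ u 4 n + φ u 5 n

def PW (n : ℕ) : ℕ := ∑ m ∈ Finset.range (n+1), (wt2 (c1 u m) + wt2 (c2 u m))

lemma phi_succ (k n : ℕ) : φ u (k+1) (n+1) = φ u k n := by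
  simp [φ, Nat.succ_le_succ_iff, Nat.succ_sub_succ]

lemma phi_zero (n : ℕ) : φ u 0 n = u.coeff n := by simp [φ]

lemma phi1 (n : ℕ) : φ u 1 (n+1) = φ u 0 n := phi_succ u 0 n
lemma phi2 (n : ℕ) : φ u 2 (n+1) = φ u 1 n := phi_succ u 1 n
lemma phi3 (n : ℕ) : φ u 3 (n+1) = φ u 2 n := phi_succ u 2 n
lemma phi4 (n : ℕ) : φ u 4 (n+1) = φ u 3 n := phi_succ u 3 n
lemma phi5 (n : ℕ) : φ u 5 (n+1) = φ u 4 n := phi_succ u 4 n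

lemma coeff1 (n : ℕ) : (u * (1 + X + X ^ 3 + X ^ 4 + X ^ 5)).coeff n = c1 u n := by
  have h : u * (1 + X + X ^ 3 + X ^ 4 + X ^ 5)
      = u + u * X ^ 1 + u * X ^ 3 + u * X ^ 4 + u * X ^ 5 := by ring
  rw [h]
  simp only [coeff_add, coeff_mul_X_pow', c1, φ, phi_zero]
  norm_num

lemma coeff2 (n : ℕ) : (u * (1 + X ^ 3 + X ^ 4 + X ^ 5)).coeff n = c2 u n := by
  have h : u * (1 + X ^ 3 + X ^ 4 + X ^ 5)
      = u + u * X ^ 3 + u * X ^ 4 + u * X ^ 5 := by ring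
  rw [h]
  simp only [coeff_add, coeff_mul_X_pow', c2, φ, phi_zero]
  norm_num

lemma card_support_eq_sum (p : Polynomial (ZMod 2)) (N : ℕ) (h : p.natDegree ≤ N) :
    p.support.card = ∑ n ∈ Finset.range (N+1), wt2 (p.coeff n) := by
  have hs : p.support = (Finset.range (N+1)).filter (fun n => p.coeff n ≠ 0) := by
    ext n
    simp only [mem_support_iff, Finset.mem_filter, Finset.mem_range]
    constructor
    · intro hn
      exact ⟨Nat.lt_succ_of_le ((le_natDegree_of_ne_zero hn).trans h), hn⟩
    · exact fun hn => hn.2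
  rw [hs, Finset.card_filter]
  rfl

lemma S_succ (n : ℕ) : S u (n+1) = stepSt (S u n) (u.coeff (n+1)) := by
  simp only [S, stepSt, phi1, phi2, phi3, phi4, phi_zero]

lemma cost_eq (n : ℕ) :
    wt2 (c1 u (n+1)) + wt2 (c2 u (n+1)) = cost (S u n) (u.coeff (n+1)) := by
  have h1 : c1 u (n+1) = u.coeff (n+1) + φ u 0 n + φ u 2 n + φ u 3 n + φ u 4 n := by
    rw [c1, phi1, phi3, phi4, phi5, phi_zero, phi_zero]
  have h2 : c2 u (n+1) = u.coeff (n+1) + φ u 2 n + φ u 3 n + φ u 4 n := by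
    rw [c2, phi3, phi4, phi5, phi_zero]
  rw [h1, h2]
  simp only [cost, S]

lemma phi_eq_zero_of_small (k n : ℕ) (h : ∀ m ≤ n, u.coeff m = 0) : φ u k n = 0 := by
  unfold φ
  split
  · exact h _ (Nat.sub_le n k)
  · rfl

lemma invariant : ∀ n : ℕ, (∃ m ≤ n, u.coeff m ≠ 0) → V (S u n) ≤ PW u n := by
  intro n
  induction n with
  | zero =>
    rintro ⟨m, hm, hne⟩
    interval_cases m
    have h1 : u.coeff 0 = 1 := by
      have := hne; revert this; generalize u.coeff 0 = x; revert x; decide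
    have hφ : ∀ k, φ u (k+1) 0 = 0 := fun k => by simp [φ]
    have hS : S u 0 = (0, 0, 0, 0, 1) := by
      rw [S, show (4:ℕ) = 3+1 from rfl]
      rw [hφ 3, hφ 2, hφ 1, hφ 0, phi_zero, h1]
    have hc1 : c1 u 0 = 1 := by
      rw [c1, phi_zero, h1, hφ 0, hφ 2, hφ 3, hφ 4]; ring
    have hc2 : c2 u 0 = 1 := by
      rw [c2, phi_zero, h1, hφ 2, hφ 3, hφ 4]; ring
    rw [hS, PW, Finset.sum_range_one, hc1, hc2]
    decide
  | succ n ih =>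
    rintro ⟨m, hm, hne⟩
    by_cases hstart : ∃ m ≤ n, u.coeff m ≠ 0
    · have h := ih hstart
      have hPW : PW u (n+1) = PW u n + (wt2 (c1 u (n+1)) + wt2 (c2 u (n+1))) := by
        rw [PW, Finset.sum_range_succ]; rfl
      rw [hPW, cost_eq, S_succ]
      calc V (stepSt (S u n) (u.coeff (n+1)))
          ≤ V (S u n) + cost (S u n) (u.coeff (n+1)) := trans_ineq _ _
        _ ≤ PW u n + cost (S u n) (u.coeff (n+1)) := by omega
    · push_neg at hstart
      have hmn : m = n + 1 := by
        by_contra h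
        exact hne (hstart m (by omega))
      subst hmn
      have h1 : u.coeff (n+1) = 1 := by
        have := hne; revert this; generalize u.coeff (n+1) = x; revert x; decide
      have hphi : ∀ k, φ u (k+1) (n+1) = 0 := fun k => by
        rw [phi_succ]; exact phi_eq_zero_of_small u k n hstart
      have hPWn : PW u n = 0 := by
        apply Finset.sum_eq_zero
        intro m hmr
        have hm' : m ≤ n := Nat.lt_succ_iff.mp (Finset.mem_range.mp hmr)
        have hz := phi_eq_zero_of_small u
        have hc1 : c1 u m = 0 := by
          simp only [c1, hz _ m (fun j hj => hstart j (hj.trans hm'))]; ring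
        have hc2 : c2 u m = 0 := by
          simp only [c2, hz _ m (fun j hj => hstart j (hj.trans hm'))]; ring
        simp [hc1, hc2, wt2]
      have hS : S u (n+1) = (0, 0, 0, 0, 1) := by
        rw [S, show (4:ℕ) = 3+1 from rfl]
        rw [hphi 3, hphi 2, hphi 1, hphi 0, phi_zero, h1]
      have hc1 : c1 u (n+1) = 1 := by
        rw [c1, phi_zero, h1, hphi 0, hphi 2, hphi 3, hphi 4]; ring
      have hc2 : c2 u (n+1) = 1 := by
        rw [c2, phi_zero, h1, hphi 2, hphi 3, hphi 4]; ring
      have hPW : PW u (n+1) = PW u n + (wt2 (c1 u (n+1)) + wt2 (c2 u (n+1))) := by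
        rw [PW, Finset.sum_range_succ]; rfl
      rw [hPW, hPWn, hS, hc1, hc2]
      decide

end Stmt17Aux

open Stmt17Aux

/-- Over `GF(2)`, the free distance of the `(2,1)` convolutional code with
generator matrix `(1 + X + X³ + X⁴ + X⁵, 1 + X³ + X⁴ + X⁵)` equals `8`: the
minimum of `wt(u·g₁) + wt(u·g₂)` over all nonzero `u ∈ GF(2)[X]` is exactly
`8`. -/
theorem stmt_17 :
    IsLeast {d : ℕ | ∃ u : Polynomial (ZMod 2), u ≠ 0 ∧
      d = (u * (1 + X + X ^ 3 + X ^ 4 + X ^ 5)).support.card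
        + (u * (1 + X ^ 3 + X ^ 4 + X ^ 5)).support.card}
      8 := by
  have hg1 : (1 + X + X ^ 3 + X ^ 4 + X ^ 5 : Polynomial (ZMod 2)).natDegree ≤ 5 := by
    compute_degree
  have hg2 : (1 + X ^ 3 + X ^ 4 + X ^ 5 : Polynomial (ZMod 2)).natDegree ≤ 5 := by
    compute_degree
  constructor
  · -- membership: u = 1 + X achieves 8
    refine ⟨1 + X, ?_, ?_⟩
    · intro h
      have := congrArg (fun p => Polynomial.coeff p 0) h
      simp at this
    · have hu : (1 + X : Polynomial (ZMod 2)).natDegree ≤ 1 := by compute_degree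
      have hd1 : ((1 + X) * (1 + X + X ^ 3 + X ^ 4 + X ^ 5) : Polynomial (ZMod 2)).natDegree ≤ 6 :=
        natDegree_mul_le.trans (by omega)
      have hd2 : ((1 + X) * (1 + X ^ 3 + X ^ 4 + X ^ 5) : Polynomial (ZMod 2)).natDegree ≤ 6 :=
        natDegree_mul_le.trans (by omega)
      rw [card_support_eq_sum _ 6 hd1, card_support_eq_sum _ 6 hd2]
      have hcoeff : ∀ n, (1 + X : Polynomial (ZMod 2)).coeff n
          = if n = 0 then 1 else if n = 1 then 1 else 0 := by
        intro n
        rcases n with _ | _ | n <;> simp [coeff_one, coeff_X]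
      simp only [coeff1, coeff2, c1, c2, φ, hcoeff]
      simp only [Finset.sum_range_succ, Finset.sum_range_zero, wt2]
      decide
  · -- lower bound
    rintro d ⟨u, hu, rfl⟩
    set D := u.natDegree with hD
    have hd1 : (u * (1 + X + X ^ 3 + X ^ 4 + X ^ 5)).natDegree ≤ D + 5 :=
      natDegree_mul_le.trans (by omega)
    have hd2 : (u * (1 + X ^ 3 + X ^ 4 + X ^ 5)).natDegree ≤ D + 5 :=
      natDegree_mul_le.trans (by omega)
    rw [card_support_eq_sum _ (D+5) hd1, card_support_eq_sum _ (D+5) hd2]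
    simp only [coeff1, coeff2]
    rw [← Finset.sum_add_distrib]
    have hstart : ∃ m ≤ D + 5, u.coeff m ≠ 0 :=
      ⟨D, by omega, by simpa [hD] using mt leadingCoeff_eq_zero.mp hu⟩
    have hinv := invariant u (D + 5) hstart
    have hSfin : S u (D + 5) = (0, 0, 0, 0, 0) := by
      have hz : ∀ k ≤ 4, φ u k (D + 5) = 0 := by
        intro k hk
        unfold φ
        rw [if_pos (by omega)]
        exact coeff_eq_zero_of_natDegree_lt (by omega)
      simp only [S, hz 4 (by norm_num), hz 3 (by norm_num), hz 2 (by norm_num),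
        hz 1 (by norm_num), hz 0 (by norm_num)]
    rw [hSfin] at hinv
    have : V ((0,0,0,0,0) : St) = 8 := by decide
    rw [this] at hinv
    exact hinv
end
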